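/- arXiv:2008.10579 — 5 statements merged into one kernel-verified Lean document; each statement's English description precedes it below -/
import Mathlib

section
/- Fix 0 < ε < 1 and let z, w ∈ ℝ^n be unit vectors. If z̃, w̃ ∈ ℝ^n are unit vectors with ‖z̃ − z‖ ≤ ε and ‖w̃ − w‖ ≤ ε, then ‖Φ_{z̃,w̃} − Φ_{z,w}‖ ≤ (88/π) ε in spectral norm. -/
open scoped BigOperators ENNReal NNReal RealInnerProductSpace Matrix
open MeasureTheory ProbabilityTheory Real Filter

noncomputable section

namespace DPR

attribute [local instance] Classical.propDecidable

/-- Entrywise ReLU on Euclidean space. -/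
def reluE {p : ℕ} (v : EuclideanSpace ℝ (Fin p)) : EuclideanSpace ℝ (Fin p) :=
  WithLp.toLp 2 (fun i => max (v i) 0)

/-- Entrywise absolute value. -/
def absVecE {p : ℕ} (v : EuclideanSpace ℝ (Fin p)) : EuclideanSpace ℝ (Fin p) :=
  WithLp.toLp 2 (fun i => |v i|)

/-- Matrix–vector multiplication as a map between Euclidean spaces. -/
def mulVecE {p q : ℕ} (M : Matrix (Fin p) (Fin q) ℝ) (x : EuclideanSpace ℝ (Fin q)) :
    EuclideanSpace ℝ (Fin p) :=
  WithLp.toLp 2 (M.mulVec x)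

/-- The `ℓ`-th row of a matrix, as a Euclidean vector. -/
def rowE {p q : ℕ} (A : Matrix (Fin p) (Fin q) ℝ) (ℓ : Fin p) : EuclideanSpace ℝ (Fin q) :=
  WithLp.toLp 2 (fun j => A ℓ j)

/-- Spectral norm of a matrix (operator norm between Euclidean spaces). -/
def specNorm {p q : ℕ} (M : Matrix (Fin p) (Fin q) ℝ) : ℝ :=
  ‖LinearMap.toContinuousLinearMap (Matrix.toEuclideanLin M)‖

/-- Angle between two vectors. -/
def ang {p : ℕ} (x y : EuclideanSpace ℝ (Fin p)) : ℝ :=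
  Real.arccos (⟪x, y⟫ / (‖x‖ * ‖y‖))

/-- The matrix `M_{x̂ ↔ ŷ}` sending `x̂ ↦ ŷ`, `ŷ ↦ x̂`, and `span{x,y}ᗮ ↦ 0`. -/
def Mmat {p : ℕ} (x y : EuclideanSpace ℝ (Fin p)) : Matrix (Fin p) (Fin p) ℝ :=
  let xh : Fin p → ℝ := fun i => x i / ‖x‖
  let yh : Fin p → ℝ := fun i => y i / ‖y‖
  if ang x y = 0 then Matrix.vecMulVec xh xh
  else if ang x y = π then -(Matrix.vecMulVec xh xh)
  else ((Real.sin (ang x y)) ^ 2)⁻¹ •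
    (Matrix.vecMulVec xh yh + Matrix.vecMulVec yh xh
      - Real.cos (ang x y) • (Matrix.vecMulVec xh xh + Matrix.vecMulVec yh yh))

/-- The matrix `Q_{x,y}`. -/
def Qmat {p : ℕ} (x y : EuclideanSpace ℝ (Fin p)) : Matrix (Fin p) (Fin p) ℝ :=
  ((π - ang x y) / (2 * π)) • (1 : Matrix (Fin p) (Fin p) ℝ)
    + (Real.sin (ang x y) / (2 * π)) • Mmat x y

/-- `W_{+,x} = diag(Wx > 0) W`. -/
def Wplus {p q : ℕ} (W : Matrix (Fin p) (Fin q) ℝ) (x : EuclideanSpace ℝ (Fin q)) :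
    Matrix (Fin p) (Fin q) ℝ :=
  Matrix.diagonal (fun i => if 0 < W.mulVec x i then (1 : ℝ) else 0) * W

/-- The Weight Distribution Condition with constant `ε`. -/
def WDC {p q : ℕ} (W : Matrix (Fin p) (Fin q) ℝ) (ε : ℝ) : Prop :=
  ∀ x y : EuclideanSpace ℝ (Fin q), x ≠ 0 → y ≠ 0 →
    specNorm ((Wplus W x)ᵀ * Wplus W y - Qmat x y) ≤ ε

/-- `A_z = diag(sgn(Az)) A`. -/
def Asign {p q : ℕ} (A : Matrix (Fin p) (Fin q) ℝ) (z : EuclideanSpace ℝ (Fin q)) :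
    Matrix (Fin p) (Fin q) ℝ :=
  Matrix.diagonal (fun i => Real.sign (A.mulVec z i)) * A

/-- The matrix `Φ_{z,w}`. -/
def Phi {p : ℕ} (z w : EuclideanSpace ℝ (Fin p)) : Matrix (Fin p) (Fin p) ℝ :=
  if z ≠ 0 ∧ w ≠ 0 then
    ((π - 2 * ang z w) / π) • (1 : Matrix (Fin p) (Fin p) ℝ)
      + (2 * Real.sin (ang z w) / π) • Mmat z w
  else 0

/-- The generative network `G` with layer sizes `n 0, n 1, …, n d` and ReLU activations. -/
def net (n : ℕ → ℕ) : ∀ d : ℕ,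
    (∀ i : Fin d, Matrix (Fin (n (i + 1))) (Fin (n i)) ℝ) →
    EuclideanSpace ℝ (Fin (n 0)) → EuclideanSpace ℝ (Fin (n d))
  | 0, _, x => x
  | (d + 1), W, x => reluE (mulVecE (W (Fin.last d)) (net n d (fun i => W i.castSucc) x))

/-- The Range Restricted Concentration Property of `A` with respect to the net, with constant `ε`. -/
def RRCP (n : ℕ → ℕ) (d m : ℕ)
    (W : ∀ i : Fin d, Matrix (Fin (n (i + 1))) (Fin (n i)) ℝ)
    (A : Matrix (Fin m) (Fin (n d)) ℝ) (ε : ℝ) : Prop :=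
  ∀ x y x₁ x₂ x₃ x₄ : EuclideanSpace ℝ (Fin (n 0)),
    |⟪mulVecE ((Asign A (net n d W x))ᵀ * Asign A (net n d W y)
          - Phi (net n d W x) (net n d W y))
        (net n d W x₁ - net n d W x₂), net n d W x₃ - net n d W x₄⟫|
      ≤ 33 * ε * ‖net n d W x₁ - net n d W x₂‖ * ‖net n d W x₃ - net n d W x₄‖

/-- The objective function `f(x) = ½‖|A G(x)| − (|A G(x⋆)| + η)‖²`. -/
def objf (n : ℕ → ℕ) (d m : ℕ)
    (W : ∀ i : Fin d, Matrix (Fin (n (i + 1))) (Fin (n i)) ℝ)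
    (A : Matrix (Fin m) (Fin (n d)) ℝ)
    (xstar : EuclideanSpace ℝ (Fin (n 0))) (η : EuclideanSpace ℝ (Fin m))
    (x : EuclideanSpace ℝ (Fin (n 0))) : ℝ :=
  (1 / 2) * ‖absVecE (mulVecE A (net n d W x))
      - (absVecE (mulVecE A (net n d W xstar)) + η)‖ ^ 2

/-- Clarke generalized directional derivative. -/
def clarkeDeriv {k : ℕ} (f : EuclideanSpace ℝ (Fin k) → ℝ) (x u : EuclideanSpace ℝ (Fin k)) : ℝ :=
  Filter.limsup (fun p : EuclideanSpace ℝ (Fin k) × ℝ => (f (p.1 + p.2 • u) - f p.1) / p.2)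
    ((nhds x) ×ˢ (nhdsWithin 0 (Set.Ioi 0)))

/-- Clarke subdifferential. -/
def clarkeSubdiff {k : ℕ} (f : EuclideanSpace ℝ (Fin k) → ℝ) (x : EuclideanSpace ℝ (Fin k)) :
    Set (EuclideanSpace ℝ (Fin k)) :=
  {v | ∀ u, ⟪v, u⟫ ≤ clarkeDeriv f x u}

/-- The negation step of the DPR algorithm. -/
def negStep {k : ℕ} (f : EuclideanSpace ℝ (Fin k) → ℝ) (y : EuclideanSpace ℝ (Fin k)) :
    EuclideanSpace ℝ (Fin k) :=
  if f (-y) < f y then -y else y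

/-- `x` is a run of the DPR subgradient method for `f` with step size `α`. -/
def IsDPR {k : ℕ} (f : EuclideanSpace ℝ (Fin k) → ℝ) (α : ℝ)
    (x : ℕ → EuclideanSpace ℝ (Fin k)) : Prop :=
  ∀ t : ℕ, ∃ v ∈ clarkeSubdiff f (negStep f (x t)), x (t + 1) = negStep f (x t) - α • v

/-- The function `g`. -/
def gfun (θ : ℝ) : ℝ := Real.arccos (((π - θ) * Real.cos θ + Real.sin θ) / π)

/-- `θ̄_{i,x}`. -/
def thetaBar {k : ℕ} (xstar x : EuclideanSpace ℝ (Fin k)) : ℕ → ℝ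
  | 0 => ang x xstar
  | (i + 1) => gfun (thetaBar xstar x i)

/-- `θ̆_i`. -/
def thetaCheck : ℕ → ℝ
  | 0 => π
  | (i + 1) => gfun (thetaCheck i)

/-- `ρ_d`. -/
def rho (d : ℕ) : ℝ :=
  2 * Real.sin (thetaCheck d) / π
    + ((π - 2 * thetaCheck d) / π) *
      ∑ i ∈ Finset.range d, (Real.sin (thetaCheck i) / π) *
        ∏ j ∈ Finset.Ico (i + 1) d, (π - thetaCheck j) / π

/-- The vector `h_x`. -/
def hvec {k : ℕ} (d : ℕ) (xstar x : EuclideanSpace ℝ (Fin k)) : EuclideanSpace ℝ (Fin k) :=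
  ((2 : ℝ) ^ d)⁻¹ •
    ((((π - 2 * thetaBar xstar x d) / π)
        * (∏ i ∈ Finset.range d, (π - thetaBar xstar x i) / π) * ‖xstar‖) • (‖xstar‖⁻¹ • xstar)
      + (‖x‖ - ‖xstar‖ * (2 * Real.sin (thetaBar xstar x d) / π
          + ((π - 2 * thetaBar xstar x d) / π) *
            ∑ i ∈ Finset.range d, (Real.sin (thetaBar xstar x i) / π) *
              ∏ j ∈ Finset.Ico (i + 1) d, (π - thetaBar xstar x j) / π)) • (‖x‖⁻¹ • x))

/-- The set `S_β`. -/
def Sset {k : ℕ} (d : ℕ) (xstar : EuclideanSpace ℝ (Fin k)) (β : ℝ) :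
    Set (EuclideanSpace ℝ (Fin k)) :=
  {x | x ≠ 0 ∧ ‖hvec d xstar x‖ ≤ ((2 : ℝ) ^ d)⁻¹ * β * max ‖x‖ ‖xstar‖}

/-- The law of a `p × q` random matrix with i.i.d. `N(0, v)` entries. -/
def gaussMatrix (p q : ℕ) (v : ℝ≥0) : Measure (Fin p → Fin q → ℝ) :=
  Measure.pi fun _ : Fin p => Measure.pi fun _ : Fin q => gaussianReal 0 v

/-- The joint law of the independent Gaussian weights `W_1, …, W_d` (with `W_i` having
i.i.d. `N(0, 1/n_i)` entries) and the Gaussian measurement matrix `A` (with i.i.d.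
`N(0, 1/m)` entries). -/
def netMeasure (n : ℕ → ℕ) (d m : ℕ) :
    Measure ((∀ i : Fin d, Fin (n (i + 1)) → Fin (n i) → ℝ) × (Fin m → Fin (n d) → ℝ)) :=
  (Measure.pi fun i : Fin d => gaussMatrix (n (i + 1)) (n i) ((n (i + 1) : ℝ≥0))⁻¹).prod
    (gaussMatrix m (n d) ((m : ℝ≥0))⁻¹)

/-! For unit vectors `z, w` at angle `θ`, the vectors `z + w` and `z - w` are orthogonal, of lengths
`2 cos (θ/2)` and `2 sin (θ/2)`, and `M_{ẑ↔ŵ}` is the reflection fixing `z + w` and negating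
`z - w`. Hence `sin θ • M_{ẑ↔ŵ} = (‖z - w‖/2) N(z + w) - (‖z + w‖/2) N(z - w)` with
`N v = v vᵀ / ‖v‖` (`sinMmat`, `outerDivNorm`), an expression without singularity at `θ ∈ {0, π}`.
As `N` is 3-Lipschitz in operator norm, this part of `Φ` moves by at most
`8 (‖z̃ - z‖ + ‖w̃ - w‖)`; the angle moves by at most `π/2 (‖z̃ - z‖ + ‖w̃ - w‖)`, by the triangle
inequality for angles and the chord bound `∠(x, y) ≤ π/2 ‖x - y‖`. -/

open scoped Matrix.Norms.L2Operator

theorem specNorm_eq_l2_opNorm {p q : ℕ} (M : Matrix (Fin p) (Fin q) ℝ) : specNorm M = ‖M‖ :=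
  rfl

theorem l2_opNorm_one_le {ι : Type*} [Fintype ι] [DecidableEq ι] : ‖(1 : Matrix ι ι ℝ)‖ ≤ 1 := by
  rw [← Matrix.l2_opNorm_toEuclideanCLM, map_one]
  exact ContinuousLinearMap.norm_id_le

theorem l2_opNorm_vecMulVec_le {m n : Type*} [Fintype m] [Fintype n] [DecidableEq n]
    (a : EuclideanSpace ℝ m) (b : EuclideanSpace ℝ n) :
    ‖Matrix.vecMulVec (a : m → ℝ) b‖ ≤ ‖a‖ * ‖b‖ := by
  rw [Matrix.l2_opNorm_def]
  refine ContinuousLinearMap.opNorm_le_bound _ (by positivity) fun x => ?_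
  have : (Matrix.toEuclideanLin.trans LinearMap.toContinuousLinearMap)
      (Matrix.vecMulVec (a : m → ℝ) b) x = ⟪b, x⟫ • a := by
    ext i
    simp [Matrix.vecMulVec, Matrix.mulVec, dotProduct, Finset.mul_sum, PiLp.inner_apply, mul_comm,
      mul_assoc]
  rw [this, norm_smul, Real.norm_eq_abs]
  nlinarith [abs_real_inner_le_norm b x, norm_nonneg a]

section OuterDivNorm

variable {ι : Type*} [Fintype ι]

def outerDivNorm (v : EuclideanSpace ℝ ι) : Matrix ι ι ℝ :=
  ‖v‖⁻¹ • Matrix.vecMulVec (v : ι → ℝ) v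

@[simp]
theorem outerDivNorm_zero : outerDivNorm (0 : EuclideanSpace ℝ ι) = 0 := by
  simp [outerDivNorm]

theorem norm_outerDivNorm_le [DecidableEq ι] (v : EuclideanSpace ℝ ι) :
    ‖outerDivNorm v‖ ≤ ‖v‖ := by
  rw [outerDivNorm, norm_smul, norm_inv, norm_norm]
  calc ‖v‖⁻¹ * ‖Matrix.vecMulVec (v : ι → ℝ) v‖ ≤ ‖v‖⁻¹ * (‖v‖ * ‖v‖) := by
        gcongr; exact l2_opNorm_vecMulVec_le v v
    _ ≤ ‖v‖ := by
        rcases eq_or_ne ‖v‖ 0 with h | h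
        · simp [h]
        · rw [inv_mul_cancel_left₀ h]

theorem outerDivNorm_sub_outerDivNorm (u v : EuclideanSpace ℝ ι) :
    outerDivNorm u - outerDivNorm v =
      ‖u‖⁻¹ • (Matrix.vecMulVec (u : ι → ℝ) (u - v : EuclideanSpace ℝ ι)
          + Matrix.vecMulVec ((u - v : EuclideanSpace ℝ ι) : ι → ℝ) v)
        + (‖u‖⁻¹ - ‖v‖⁻¹) • Matrix.vecMulVec (v : ι → ℝ) v := by
  simp only [outerDivNorm, WithLp.ofLp_sub, Matrix.vecMulVec_sub, Matrix.sub_vecMulVec]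
  module

theorem norm_outerDivNorm_sub_le_of_norm_le [DecidableEq ι] {u v : EuclideanSpace ℝ ι}
    (h : ‖v‖ ≤ ‖u‖) :
    ‖outerDivNorm u - outerDivNorm v‖ ≤ 3 * ‖u - v‖ := by
  rcases (norm_nonneg v).eq_or_lt with hv | hv
  · rw [norm_eq_zero.1 hv.symm, outerDivNorm_zero, sub_zero, sub_zero]
    linarith [norm_outerDivNorm_le u, norm_nonneg u]
  have hu : 0 < ‖u‖ := hv.trans_le h
  set d := ‖u - v‖
  have hdn : ‖u‖ - ‖v‖ ≤ d := norm_sub_norm_le u v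
  have hfirst : ‖‖u‖⁻¹ • (Matrix.vecMulVec (u : ι → ℝ) (u - v : EuclideanSpace ℝ ι)
      + Matrix.vecMulVec ((u - v : EuclideanSpace ℝ ι) : ι → ℝ) v)‖ ≤ 2 * d := by
    rw [norm_smul, norm_inv, norm_norm, inv_mul_le_iff₀ hu]
    calc _ ≤ ‖u‖ * d + d * ‖v‖ :=
          (norm_add_le _ _).trans (add_le_add (l2_opNorm_vecMulVec_le _ _)
            (l2_opNorm_vecMulVec_le _ _))
      _ ≤ ‖u‖ * (2 * d) := by nlinarith [norm_nonneg (u - v)]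
  have hsecond : ‖(‖u‖⁻¹ - ‖v‖⁻¹) • Matrix.vecMulVec (v : ι → ℝ) v‖ ≤ d := by
    have hcoef : ‖‖u‖⁻¹ - ‖v‖⁻¹‖ = (‖u‖ - ‖v‖) / (‖u‖ * ‖v‖) := by
      rw [Real.norm_eq_abs, abs_of_nonpos (sub_nonpos.2 (inv_anti₀ hv h))]
      field_simp
      ring
    rw [norm_smul, hcoef]
    calc _ ≤ (‖u‖ - ‖v‖) / (‖u‖ * ‖v‖) * (‖v‖ * ‖v‖) := by
          gcongr
          exact l2_opNorm_vecMulVec_le v v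
      _ = (‖u‖ - ‖v‖) * (‖v‖ / ‖u‖) := by field_simp
      _ ≤ d * 1 := by gcongr; exact (div_le_one hu).2 h
      _ = d := mul_one d
  rw [outerDivNorm_sub_outerDivNorm]
  exact (norm_add_le _ _).trans (by linarith)

theorem norm_outerDivNorm_sub_le [DecidableEq ι] (u v : EuclideanSpace ℝ ι) :
    ‖outerDivNorm u - outerDivNorm v‖ ≤ 3 * ‖u - v‖ := by
  rcases le_total ‖v‖ ‖u‖ with h | h
  · exact norm_outerDivNorm_sub_le_of_norm_le h
  · rw [norm_sub_rev, norm_sub_rev u]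
    exact norm_outerDivNorm_sub_le_of_norm_le h

theorem norm_smul_outerDivNorm_sub_le [DecidableEq ι] (t t' : ℝ) (v v' : EuclideanSpace ℝ ι) :
    ‖t' • outerDivNorm v' - t • outerDivNorm v‖ ≤ |t'| * (3 * ‖v' - v‖) + |t' - t| * ‖v‖ := by
  rw [show t' • outerDivNorm v' - t • outerDivNorm v
      = t' • (outerDivNorm v' - outerDivNorm v) + (t' - t) • outerDivNorm v by module]
  refine (norm_add_le _ _).trans ?_
  rw [norm_smul, norm_smul, Real.norm_eq_abs, Real.norm_eq_abs]
  gcongr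
  · exact norm_outerDivNorm_sub_le v' v
  · exact norm_outerDivNorm_le v

theorem norm_half_smul_outerDivNorm_sub_le [DecidableEq ι] {u u' v v' : EuclideanSpace ℝ ι}
    (hu : ‖u‖ ≤ 2) (hv' : ‖v'‖ ≤ 2) :
    ‖(‖v'‖ / 2) • outerDivNorm u' - (‖v‖ / 2) • outerDivNorm u‖ ≤ 3 * ‖u' - u‖ + ‖v' - v‖ := by
  refine (norm_smul_outerDivNorm_sub_le _ _ u u').trans ?_
  have hv : |‖v'‖ / 2 - ‖v‖ / 2| ≤ ‖v' - v‖ / 2 := by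
    rw [← sub_div, abs_div, abs_two]
    gcongr
    exact abs_norm_sub_norm_le v' v
  rw [abs_of_nonneg (by positivity)]
  nlinarith [norm_nonneg (u' - u), norm_nonneg u, abs_nonneg (‖v'‖ / 2 - ‖v‖ / 2)]

end OuterDivNorm

section Angle

open InnerProductGeometry

variable {p : ℕ}

theorem ang_eq_angle (x y : EuclideanSpace ℝ (Fin p)) : ang x y = angle x y := rfl

theorem abs_ang_sub_ang_le (z w z' w' : EuclideanSpace ℝ (Fin p)) :
    |ang z' w' - ang z w| ≤ ang z' z + ang w' w := by
  simp only [ang_eq_angle]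
  have := angle_le_angle_add_angle z' z w'
  have := angle_le_angle_add_angle z w w'
  have := angle_le_angle_add_angle z z' w
  have := angle_le_angle_add_angle z' w' w
  rw [angle_comm z z', angle_comm w w'] at *
  rw [abs_le]
  constructor <;> linarith

theorem cos_ang_of_norm_eq_one {x y : EuclideanSpace ℝ (Fin p)} (hx : ‖x‖ = 1) (hy : ‖y‖ = 1) :
    Real.cos (ang x y) = ⟪x, y⟫ := by
  rw [ang_eq_angle, cos_angle, hx, hy, mul_one, div_one]

theorem ang_le_pi_div_two_mul_norm_sub {x y : EuclideanSpace ℝ (Fin p)} (hx : ‖x‖ = 1)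
    (hy : ‖y‖ = 1) : ang x y ≤ π / 2 * ‖x - y‖ := by
  have hπ := Real.pi_pos
  have hθ0 : 0 ≤ ang x y / 2 := by have := angle_nonneg x y; rw [ang_eq_angle]; linarith
  have hθπ : ang x y / 2 ≤ π / 2 := by have := angle_le_pi x y; rw [ang_eq_angle]; linarith
  have hchord : ‖x - y‖ = 2 * Real.sin (ang x y / 2) := by
    have := Real.sin_nonneg_of_nonneg_of_le_pi hθ0 (by linarith)
    rw [← pow_left_inj₀ (norm_nonneg _) (by positivity) two_ne_zero, norm_sub_sq_real, hx, hy,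
      mul_pow, Real.sin_sq_eq_half_sub, mul_div_cancel₀ _ two_ne_zero,
      cos_ang_of_norm_eq_one hx hy]
    ring
  rw [hchord]
  calc ang x y = π / 2 * (2 * (2 / π * (ang x y / 2))) := by field_simp
    _ ≤ π / 2 * (2 * Real.sin (ang x y / 2)) := by gcongr; exact Real.mul_le_sin hθ0 hθπ

theorem norm_sub_mul_norm_add_eq {z w : EuclideanSpace ℝ (Fin p)} (hz : ‖z‖ = 1) (hw : ‖w‖ = 1) :
    ‖z - w‖ * ‖z + w‖ = 2 * Real.sin (ang z w) := by
  have := sin_angle_nonneg z w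
  rw [← pow_left_inj₀ (by positivity) (by rw [ang_eq_angle]; positivity) two_ne_zero, mul_pow,
    norm_sub_sq_real, norm_add_sq_real, hz, hw, mul_pow, Real.sin_sq,
    cos_ang_of_norm_eq_one hz hw]
  ring

end Angle

section SinMmat

variable {p : ℕ}

def sinMmat (z w : EuclideanSpace ℝ (Fin p)) : Matrix (Fin p) (Fin p) ℝ :=
  (‖z - w‖ / 2) • outerDivNorm (z + w) - (‖z + w‖ / 2) • outerDivNorm (z - w)

theorem sin_ang_smul_Mmat {z w : EuclideanSpace ℝ (Fin p)} (hz : ‖z‖ = 1) (hw : ‖w‖ = 1) :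
    Real.sin (ang z w) • Mmat z w = sinMmat z w := by
  have hprod := norm_sub_mul_norm_add_eq hz hw
  by_cases hs : Real.sin (ang z w) = 0
  · rw [hs, mul_zero, mul_eq_zero, norm_eq_zero, norm_eq_zero] at hprod
    rcases hprod with h | h <;> simp [hs, sinMmat, h]
  have h0 : ang z w ≠ 0 := fun h => hs (by rw [h, Real.sin_zero])
  have hπ : ang z w ≠ π := fun h => hs (by rw [h, Real.sin_pi])
  have ha : ‖z + w‖ ^ 2 = 2 + 2 * ⟪z, w⟫ := by rw [norm_add_sq_real, hz, hw]; ring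
  have hb : ‖z - w‖ ^ 2 = 2 - 2 * ⟪z, w⟫ := by rw [norm_sub_sq_real, hz, hw]; ring
  have ha0 : ‖z + w‖ ≠ 0 := fun h => hs (by rw [h, mul_zero] at hprod; linarith)
  have hb0 : ‖z - w‖ ≠ 0 := fun h => hs (by rw [h, zero_mul] at hprod; linarith)
  ext i j
  simp only [Mmat, if_neg h0, if_neg hπ, sinMmat, outerDivNorm, hz, hw, div_one,
    cos_ang_of_norm_eq_one hz hw, Matrix.smul_apply, Matrix.sub_apply, Matrix.add_apply,
    Matrix.vecMulVec_apply, smul_eq_mul, WithLp.ofLp_add, WithLp.ofLp_sub, Pi.add_apply,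
    Pi.sub_apply]
  field_simp
  rw [ha, hb]
  linear_combination (2 * (z i * w j + w i * z j - ⟪z, w⟫ * (z i * z j + w i * w j))) * hprod

theorem norm_sinMmat_sub_le {z w z' w' : EuclideanSpace ℝ (Fin p)} (hz : ‖z‖ = 1) (hw : ‖w‖ = 1)
    (hz' : ‖z'‖ = 1) (hw' : ‖w'‖ = 1) :
    ‖sinMmat z' w' - sinMmat z w‖ ≤ 8 * (‖z' - z‖ + ‖w' - w‖) := by
  have hadd : ‖(z' + w') - (z + w)‖ ≤ ‖z' - z‖ + ‖w' - w‖ := by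
    rw [add_sub_add_comm]; exact norm_add_le _ _
  have hsub : ‖(z' - w') - (z - w)‖ ≤ ‖z' - z‖ + ‖w' - w‖ := by
    rw [sub_sub_sub_comm]; exact norm_sub_le _ _
  have h₁ := norm_half_smul_outerDivNorm_sub_le (u := z + w) (u' := z' + w') (v := z - w)
    (v' := z' - w') (by linarith [norm_add_le z w]) (by linarith [norm_sub_le z' w'])
  have h₂ := norm_half_smul_outerDivNorm_sub_le (u := z - w) (u' := z' - w') (v := z + w)
    (v' := z' + w') (by linarith [norm_sub_le z w]) (by linarith [norm_add_le z' w'])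
  rw [sinMmat, sinMmat, sub_sub_sub_comm]
  exact (norm_sub_le _ _).trans (by linarith)

theorem Phi_eq_of_norm_eq_one {z w : EuclideanSpace ℝ (Fin p)} (hz : ‖z‖ = 1) (hw : ‖w‖ = 1) :
    Phi z w = ((π - 2 * ang z w) / π) • (1 : Matrix (Fin p) (Fin p) ℝ)
      + (2 / π) • sinMmat z w := by
  have hz0 : z ≠ 0 := norm_ne_zero_iff.1 (by rw [hz]; exact one_ne_zero)
  have hw0 : w ≠ 0 := norm_ne_zero_iff.1 (by rw [hw]; exact one_ne_zero)
  rw [Phi, if_pos ⟨hz0, hw0⟩, ← sin_ang_smul_Mmat hz hw, smul_smul, div_mul_eq_mul_div]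

theorem norm_Phi_sub_le {z w z' w' : EuclideanSpace ℝ (Fin p)} (hz : ‖z‖ = 1) (hw : ‖w‖ = 1)
    (hz' : ‖z'‖ = 1) (hw' : ‖w'‖ = 1) :
    ‖Phi z' w' - Phi z w‖ ≤ (1 + 16 / π) * (‖z' - z‖ + ‖w' - w‖) := by
  have hπ := Real.pi_pos
  have hang : |ang z w - ang z' w'| ≤ π / 2 * (‖z' - z‖ + ‖w' - w‖) := by
    rw [abs_sub_comm]
    linarith [abs_ang_sub_ang_le z w z' w', ang_le_pi_div_two_mul_norm_sub hz' hz,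
      ang_le_pi_div_two_mul_norm_sub hw' hw]
  rw [Phi_eq_of_norm_eq_one hz hw, Phi_eq_of_norm_eq_one hz' hw', add_sub_add_comm, ← sub_smul,
    ← smul_sub]
  calc _ ≤ |(π - 2 * ang z' w') / π - (π - 2 * ang z w) / π| * 1
        + 2 / π * (8 * (‖z' - z‖ + ‖w' - w‖)) := by
        refine (norm_add_le _ _).trans (add_le_add ?_ ?_)
        · rw [norm_smul, Real.norm_eq_abs]; gcongr; exact l2_opNorm_one_le
        · rw [norm_smul, Real.norm_of_nonneg (by positivity)]; gcongr
          exact norm_sinMmat_sub_le hz hw hz' hw'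
    _ = 2 / π * |ang z w - ang z' w'| + 16 / π * (‖z' - z‖ + ‖w' - w‖) := by
        rw [show (π - 2 * ang z' w') / π - (π - 2 * ang z w) / π = 2 / π * (ang z w - ang z' w')
          by field_simp; ring, abs_mul, abs_of_pos (by positivity)]
        ring
    _ ≤ 2 / π * (π / 2 * (‖z' - z‖ + ‖w' - w‖)) + 16 / π * (‖z' - z‖ + ‖w' - w‖) := by gcongr
    _ = (1 + 16 / π) * (‖z' - z‖ + ‖w' - w‖) := by field_simp

end SinMmat

theorem statement_6_general {n : ℕ} (ε : ℝ)
    (z w zt wt : EuclideanSpace ℝ (Fin n))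
    (hz : ‖z‖ = 1) (hw : ‖w‖ = 1) (hzt : ‖zt‖ = 1) (hwt : ‖wt‖ = 1)
    (h1 : ‖zt - z‖ ≤ ε) (h2 : ‖wt - w‖ ≤ ε) :
    specNorm (Phi zt wt - Phi z w) ≤ 88 / π * ε := by
  have hπ := Real.pi_pos
  rw [specNorm_eq_l2_opNorm]
  calc ‖Phi zt wt - Phi z w‖ ≤ (1 + 16 / π) * (‖zt - z‖ + ‖wt - w‖) :=
        norm_Phi_sub_le hz hw hzt hwt
    _ ≤ (1 + 16 / π) * (2 * ε) := by gcongr; linarith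
    _ ≤ 88 / π * ε := by
        rw [show (1 + 16 / π) * (2 * ε) = (2 * π + 32) / π * ε by field_simp; ring]
        have hε : 0 ≤ ε := (norm_nonneg _).trans h1
        gcongr
        linarith [Real.pi_lt_four]

/-- continuity of `Φ_{z,w}` in `(z, w)` on the unit sphere. -/
theorem statement_6 {n : ℕ} (ε : ℝ) (hε0 : 0 < ε) (hε1 : ε < 1)
    (z w zt wt : EuclideanSpace ℝ (Fin n))
    (hz : ‖z‖ = 1) (hw : ‖w‖ = 1) (hzt : ‖zt‖ = 1) (hwt : ‖wt‖ = 1)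
    (h1 : ‖zt - z‖ ≤ ε) (h2 : ‖wt - w‖ ≤ ε) :
    specNorm (Phi zt wt - Phi z w) ≤ 88 / π * ε :=
  statement_6_general ε z w zt wt hz hw hzt hwt h1 h2

end DPR
end
end

section
/- Let V be a subspace of ℝ^n and let A ∈ ℝ^{m × n} have i.i.d. N(0, 1/m) entries. Then with probability 1, the set {diag(sgn(Av)) A : v ∈ V} of matrices has cardinality at most 10 m^{2 dim V}. -/
/-!
The bound holds for every `A`, so the event is the whole space. The matrix `diag(sgn(Av)) A`
only depends on the sign vector of the `m` functionals `v ↦ (Av)ᵢ` on `V`. When a functional `g`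
is added, a sign pattern of the previous functionals is either realised on one side of `ker g`
only, or on both sides, and then by convexity also on `V ∩ ker g`. Hence the number `N(m, V)` of
sign patterns satisfies `N(m + 1, V) ≤ N(m, V) + 2 N(m, V ∩ ker g)`, which gives
`N(m, V) ≤ (2m + 1)^(dim V) ≤ m^(2 dim V)` for `m ≥ 3`; for `m ≤ 2` we use `N(m, V) ≤ 3^m`.
-/

open scoped BigOperators ENNReal NNReal RealInnerProductSpace Matrix
open MeasureTheory ProbabilityTheory Real Filter

noncomputable section

namespace DPR

attribute [local instance] Classical.propDecidable

open Module

lemma sign_mul_add_mul_of_sign_eq {a b s t : ℝ} (hs : 0 < s) (ht : 0 < t)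
    (h : Real.sign a = Real.sign b) : Real.sign (s * a + t * b) = Real.sign a := by
  rcases lt_trichotomy a 0 with ha | ha | ha <;> rcases lt_trichotomy b 0 with hb | hb | hb <;>
    simp only [Real.sign_of_neg, Real.sign_of_pos, Real.sign_zero, ha, hb] at h ⊢ <;>
    norm_num at h
  · exact Real.sign_of_neg (by nlinarith)
  · simp
  · exact Real.sign_of_pos (by nlinarith)

lemma pow_succ_add_two_mul_pow_le {a j k : ℕ} (ha : 1 ≤ a) (hjk : j ≤ k) :
    a ^ (k + 1) + 2 * a ^ j ≤ (a + 2) ^ (k + 1) :=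
  calc a ^ (k + 1) + 2 * a ^ j
      ≤ a ^ (k + 1) + 2 * a ^ k := by gcongr
    _ = (a + 2) * a ^ k := by ring
    _ ≤ (a + 2) * (a + 2) ^ k := by gcongr; omega
    _ = (a + 2) ^ (k + 1) := by ring

section SignPatterns

variable {E : Type*} [AddCommGroup E] [Module ℝ E]

def signPattern {m : ℕ} (f : Fin m → E →ₗ[ℝ] ℝ) (v : E) : Fin m → ℝ :=
  fun i => Real.sign (f i v)

def signPatterns {m : ℕ} (V : Submodule ℝ E) (f : Fin m → E →ₗ[ℝ] ℝ) : Set (Fin m → ℝ) :=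
  signPattern f '' V

lemma signPattern_eq_snoc {m : ℕ} (f : Fin (m + 1) → E →ₗ[ℝ] ℝ) (v : E) :
    signPattern f v = Fin.snoc (signPattern (Fin.init f) v) (Real.sign (f (Fin.last m) v)) :=
  (Fin.snoc_init_self _).symm

lemma signPattern_mem_signPatterns_inf_ker {m : ℕ} {V : Submodule ℝ E}
    {f : Fin m → E →ₗ[ℝ] ℝ} {g : E →ₗ[ℝ] ℝ} {u w : E} (hu : u ∈ V) (hw : w ∈ V)
    (hgu : 0 < g u) (hgw : g w < 0) (h : signPattern f u = signPattern f w) :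
    signPattern f u ∈ signPatterns (V ⊓ LinearMap.ker g) f := by
  -- the segment from `u` to `w` crosses `ker g` without changing any other sign
  refine ⟨(-g w) • u + g u • w, ⟨V.add_mem (V.smul_mem _ hu) (V.smul_mem _ hw), ?_⟩, ?_⟩
  · simp only [SetLike.mem_coe, LinearMap.mem_ker, map_add, map_smul, smul_eq_mul]
    ring
  · funext i
    simp only [signPattern, map_add, map_smul, smul_eq_mul]
    exact sign_mul_add_mul_of_sign_eq (neg_pos.mpr hgw) hgu (congrFun h i)

lemma signPatterns_snoc_subset {m : ℕ} (V : Submodule ℝ E) (f : Fin (m + 1) → E →ₗ[ℝ] ℝ) :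
    signPatterns V f ⊆
      (Fin.snoc · 1) '' (signPattern (Fin.init f) '' (V ∩ {v | 0 < f (Fin.last m) v})) ∪
      (Fin.snoc · (-1)) '' (signPattern (Fin.init f) '' (V ∩ {v | f (Fin.last m) v < 0})) ∪
      (Fin.snoc · 0) '' (signPattern (Fin.init f) '' (V ∩ {v | f (Fin.last m) v = 0})) := by
  rintro _ ⟨v, hv, rfl⟩
  rw [signPattern_eq_snoc]
  rcases lt_trichotomy (f (Fin.last m) v) 0 with h | h | h
  · exact .inl (.inr ⟨_, ⟨v, ⟨hv, h⟩, rfl⟩, by rw [Real.sign_of_neg h]⟩)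
  · exact .inr ⟨_, ⟨v, ⟨hv, h⟩, rfl⟩, by rw [h, Real.sign_zero]⟩
  · exact .inl (.inl ⟨_, ⟨v, ⟨hv, h⟩, rfl⟩, by rw [Real.sign_of_pos h]⟩)

lemma encard_signPatterns_snoc_le {m : ℕ} (V : Submodule ℝ E) (f : Fin (m + 1) → E →ₗ[ℝ] ℝ) :
    (signPatterns V f).encard ≤ (signPatterns V (Fin.init f)).encard
      + 2 * (signPatterns (V ⊓ LinearMap.ker (f (Fin.last m))) (Fin.init f)).encard := by
  set g := f (Fin.last m)
  set T := signPatterns V (Fin.init f)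
  set T₀ := signPatterns (V ⊓ LinearMap.ker g) (Fin.init f)
  set Ppos := signPattern (Fin.init f) '' (V ∩ {v | 0 < g v})
  set Pneg := signPattern (Fin.init f) '' (V ∩ {v | g v < 0})
  set Pzero := signPattern (Fin.init f) '' (V ∩ {v | g v = 0})
  have hpos : Ppos ⊆ T := Set.image_mono Set.inter_subset_left
  have hneg : Pneg ⊆ T := Set.image_mono Set.inter_subset_left
  have hzero : Pzero ⊆ T₀ := Set.image_mono fun v hv => ⟨hv.1, hv.2⟩
  have hcross : Ppos ∩ Pneg ⊆ T₀ := by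
    rintro _ ⟨⟨u, ⟨hu, hgu⟩, rfl⟩, ⟨w, ⟨hw, hgw⟩, huw⟩⟩
    exact signPattern_mem_signPatterns_inf_ker hu hw hgu hgw huw.symm
  calc (signPatterns V f).encard
      ≤ Ppos.encard + Pneg.encard + Pzero.encard := by
        refine (Set.encard_le_encard (signPatterns_snoc_subset V f)).trans ?_
        refine (Set.encard_union_le _ _).trans (add_le_add ((Set.encard_union_le _ _).trans ?_) ?_)
        · exact add_le_add (Set.encard_image_le _ _) (Set.encard_image_le _ _)
        · exact Set.encard_image_le _ _
    _ = (Ppos ∪ Pneg).encard + (Ppos ∩ Pneg).encard + Pzero.encard := by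
        rw [Set.encard_union_add_encard_inter]
    _ ≤ T.encard + T₀.encard + T₀.encard := by
        gcongr
        · exact Set.union_subset hpos hneg
    _ = T.encard + 2 * T₀.encard := by ring

lemma encard_signPatterns_snoc_le_of_le_ker {m : ℕ} {V : Submodule ℝ E}
    {f : Fin (m + 1) → E →ₗ[ℝ] ℝ} (hV : V ≤ LinearMap.ker (f (Fin.last m))) :
    (signPatterns V f).encard ≤ (signPatterns V (Fin.init f)).encard := by
  refine le_trans (Set.encard_le_encard ?_) (Set.encard_image_le (Fin.snoc · 0) _)
  rintro _ ⟨v, hv, rfl⟩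
  exact ⟨_, ⟨v, hv, rfl⟩, by rw [signPattern_eq_snoc, LinearMap.mem_ker.mp (hV hv), Real.sign_zero]⟩

lemma encard_signPatterns_le_three_pow {m : ℕ} (V : Submodule ℝ E) (f : Fin m → E →ₗ[ℝ] ℝ) :
    (signPatterns V f).encard ≤ (3 ^ m : ℕ) := by
  have hsub : signPatterns V f ⊆
      (Fintype.piFinset fun _ : Fin m => ({-1, 0, 1} : Finset ℝ) : Set (Fin m → ℝ)) := by
    rintro _ ⟨v, -, rfl⟩
    simpa [Fintype.mem_piFinset, signPattern] using fun i => Real.sign_apply_eq (f i v)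
  refine (Set.encard_le_encard hsub).trans_eq ?_
  rw [Set.encard_coe_eq_coe_finsetCard, Fintype.card_piFinset]
  norm_num

variable [FiniteDimensional ℝ E]

lemma encard_signPatterns_le_pow {m : ℕ} (V : Submodule ℝ E) (f : Fin m → E →ₗ[ℝ] ℝ) :
    (signPatterns V f).encard ≤ ((2 * m + 1) ^ finrank ℝ V : ℕ) := by
  induction m generalizing V with
  | zero =>
    simpa using Set.encard_le_one_iff.mpr fun a b _ _ => Subsingleton.elim a b
  | succ m ih =>
    by_cases hV : V ≤ LinearMap.ker (f (Fin.last m))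
    · calc (signPatterns V f).encard
          ≤ (signPatterns V (Fin.init f)).encard := encard_signPatterns_snoc_le_of_le_ker hV
        _ ≤ ((2 * m + 1) ^ finrank ℝ V : ℕ) := ih V _
        _ ≤ ((2 * (m + 1) + 1) ^ finrank ℝ V : ℕ) := by gcongr; omega
    · have hlt := Submodule.finrank_lt_finrank_of_lt (inf_lt_left.mpr hV)
      obtain ⟨k, hk⟩ : ∃ k, finrank ℝ V = k + 1 := Nat.exists_eq_add_one.mpr (by omega)
      calc (signPatterns V f).encard
          ≤ (signPatterns V (Fin.init f)).encard
            + 2 * (signPatterns (V ⊓ LinearMap.ker (f (Fin.last m))) (Fin.init f)).encard :=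
            encard_signPatterns_snoc_le V f
        _ ≤ ((2 * m + 1) ^ finrank ℝ V : ℕ)
            + 2 * ((2 * m + 1) ^ finrank ℝ ↥(V ⊓ LinearMap.ker (f (Fin.last m))) : ℕ) := by
            gcongr <;> exact ih _ _
        _ ≤ ((2 * (m + 1) + 1) ^ finrank ℝ V : ℕ) := by
            rw [hk] at hlt ⊢
            exact_mod_cast pow_succ_add_two_mul_pow_le (by omega) (by omega)

lemma encard_signPatterns_le_ten_mul {m : ℕ} (hm : 0 < m) (V : Submodule ℝ E)
    (f : Fin m → E →ₗ[ℝ] ℝ) :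
    (signPatterns V f).encard ≤ (10 * m ^ (2 * finrank ℝ V) : ℕ) := by
  have hpow : 1 ≤ m ^ (2 * finrank ℝ V) := Nat.one_le_pow _ _ hm
  rcases le_or_gt m 2 with hm2 | hm3
  · refine (encard_signPatterns_le_three_pow V f).trans ?_
    have : 3 ^ m ≤ 9 := by interval_cases m <;> norm_num
    exact_mod_cast (by omega : 3 ^ m ≤ 10 * m ^ (2 * finrank ℝ V))
  · refine (encard_signPatterns_le_pow V f).trans ?_
    have : (2 * m + 1) ^ finrank ℝ V ≤ m ^ (2 * finrank ℝ V) := by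
      rw [pow_mul]
      gcongr
      nlinarith
    exact_mod_cast (by omega : (2 * m + 1) ^ finrank ℝ V ≤ 10 * m ^ (2 * finrank ℝ V))

end SignPatterns

instance isProbabilityMeasure_gaussMatrix (p q : ℕ) (v : ℝ≥0) :
    IsProbabilityMeasure (gaussMatrix p q v) := by
  unfold gaussMatrix
  infer_instance

def rowFunctional {p q : ℕ} (A : Matrix (Fin p) (Fin q) ℝ) (i : Fin p) :
    EuclideanSpace ℝ (Fin q) →ₗ[ℝ] ℝ :=
  LinearMap.proj i ∘ₗ A.mulVecLin ∘ₗ (WithLp.linearEquiv 2 ℝ (Fin q → ℝ)).toLinearMap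

lemma setOf_eq_Asign_eq_image {p q : ℕ} (A : Matrix (Fin p) (Fin q) ℝ)
    (V : Submodule ℝ (EuclideanSpace ℝ (Fin q))) :
    {B | ∃ v ∈ V, B = Asign A v} =
      (fun σ => Matrix.diagonal σ * A) '' signPatterns V (rowFunctional A) := by
  rw [signPatterns, Set.image_image]
  ext B
  exact exists_congr fun v => and_congr_right fun _ => eq_comm

/-- with probability `1` over a Gaussian `A`, the set
`{diag(sgn(Av)) A : v ∈ V}` has at most `10 m^(2 dim V)` elements. -/
theorem statement_7 {m n : ℕ} (hm : 0 < m) (V : Submodule ℝ (EuclideanSpace ℝ (Fin n))) :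
    gaussMatrix m n ((m : ℝ≥0))⁻¹
      {A | {B : Matrix (Fin m) (Fin n) ℝ | ∃ v ∈ V, B = Asign (Matrix.of A) v}.Finite ∧
        {B : Matrix (Fin m) (Fin n) ℝ | ∃ v ∈ V, B = Asign (Matrix.of A) v}.ncard
          ≤ 10 * m ^ (2 * Module.finrank ℝ V)} = 1 := by
  refine (congrArg _ (Set.eq_univ_of_forall fun A => ?_)).trans measure_univ
  rw [Set.mem_ofPred_eq, ← Set.encard_le_coe_iff_finite_ncard_le, setOf_eq_Asign_eq_image]
  exact (Set.encard_image_le _ _).trans (encard_signPatterns_le_ten_mul hm V _)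

end DPR
end
end

section
/- The quantities ρ_d satisfy: there exists κ > 0 such that ρ_d ≥ κ for all integers d ≥ 2 (i.e. min_{d ≥ 2} ρ_d > 0), and there exists a positive numerical constant C such that 1/(C(d+2)²) ≤ 1 − ρ_d for all integers d ≥ 2. -/
open scoped BigOperators ENNReal NNReal RealInnerProductSpace Matrix
open MeasureTheory ProbabilityTheory Real Filter

noncomputable section

namespace DPR

attribute [local instance] Classical.propDecidable

/-!
For `d ≥ 1` the sum in `ρ_d` telescopes: unrolling `cos θ̆_{i+1} = ((π - θ̆_i) cos θ̆_i + sin θ̆_i)/π`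
from `cos θ̆_1 = 0` gives exactly `cos θ̆_d`, so `ρ_d = ρ(θ̆_d)` with
`ρ(θ) = 2 sin θ/π + (π - 2θ) cos θ/π`, and `θ̆_d ∈ (0, π/2]`. On `[0, π/2]` Jordan's inequalities give
`ρ(θ) ≥ 1/4`, and `1 - ρ(θ) = (1 - cos θ) - 2 (sin θ - θ cos θ)/π ≥ θ²/100` because
`sin θ - θ cos θ ≤ θ³/3`. The same cubic bound controls `cos g(θ) - cos θ = (sin θ - θ cos θ)/π`,
whence `g(θ) ≥ θ - πθ²/6`; this propagates `θ̆_d ≥ 1/(4d - 7)` from `θ̆_2 = arccos (1/π) ≥ 1`.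
-/

def rhoOf (θ : ℝ) : ℝ := 2 * sin θ / π + (π - 2 * θ) / π * cos θ

section Trigonometry

variable {x y : ℝ}

lemma sin_sub_mul_cos_le (hx : 0 ≤ x) : sin x - x * cos x ≤ x ^ 3 / 3 := by
  let f (t : ℝ) : ℝ := t ^ 3 / 3 - (sin t - t * cos t)
  have hderiv (t : ℝ) : deriv f t = t * (t - sin t) := by
    simp (disch := fun_prop) only [f, deriv_fun_sub, deriv_div_const, deriv_fun_pow, deriv_id'',
      Real.deriv_sin, deriv_fun_mul, deriv_cos', Nat.cast_ofNat, Nat.add_one_sub_one, mul_one,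
      one_mul, mul_neg, sub_add_cancel_left, neg_neg]
    ring
  have hmono : MonotoneOn f (Set.Ici 0) := by
    apply monotoneOn_of_deriv_nonneg (convex_Ici 0) (by fun_prop) (by fun_prop)
    intro t ht
    rw [interior_Ici] at ht
    rw [hderiv]
    exact mul_nonneg ht.out.le (sub_nonneg.mpr (sin_le ht.out.le))
  have := hmono Set.self_mem_Ici hx hx
  simp only [f, sin_zero, cos_zero] at this
  linarith

lemma mul_sub_le_cos_sub_cos (hy : 0 ≤ y) (hyx : y ≤ x) (hx : x ≤ π / 2) :
    2 * x * (x - y) / π ^ 2 ≤ cos y - cos x := by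
  have hπ := pi_pos
  have hsum : x / π ≤ sin ((x + y) / 2) :=
    calc x / π ≤ 2 / π * ((x + y) / 2) := by rw [div_le_iff₀ hπ]; field_simp; linarith
      _ ≤ sin ((x + y) / 2) := mul_le_sin (by linarith) (by linarith)
  have hdiff : (x - y) / π ≤ sin ((x - y) / 2) :=
    calc (x - y) / π = 2 / π * ((x - y) / 2) := by ring
      _ ≤ sin ((x - y) / 2) := mul_le_sin (by linarith) (by linarith)
  have hprod : cos y - cos x = 2 * sin ((x + y) / 2) * sin ((x - y) / 2) := by
    rw [cos_sub_cos, show (y - x) / 2 = -((x - y) / 2) by ring, sin_neg, add_comm y]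
    ring
  calc 2 * x * (x - y) / π ^ 2 = 2 * (x / π) * ((x - y) / π) := by ring
    _ ≤ 2 * sin ((x + y) / 2) * sin ((x - y) / 2) := by
        gcongr
        exact mul_nonneg zero_le_two ((div_nonneg (by linarith) hπ.le).trans hsum)
    _ = cos y - cos x := hprod.symm

end Trigonometry

lemma quarter_le_rhoOf {θ : ℝ} (h0 : 0 ≤ θ) (h1 : θ ≤ π / 2) : 1 / 4 ≤ rhoOf θ := by
  have hπ := pi_pos
  have hπ4 : π < 4 := pi_lt_four
  have hs := mul_le_sin h0 h1
  have hc := one_sub_mul_le_cos h0 h1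
  set t := 2 / π * θ with ht
  have ht0 : 0 ≤ t := by positivity
  have ht1 : t ≤ 1 := by rw [ht, div_mul_eq_mul_div, div_le_one hπ]; linarith
  have hπ2 : 1 / 2 ≤ 2 / π := by rw [le_div_iff₀ hπ]; linarith
  have hrho : rhoOf θ = 2 / π * sin θ + (1 - t) * cos θ := by
    rw [rhoOf, ht]; field_simp
  rw [hrho]
  calc 1 / 4 ≤ 1 / 2 * t + (1 - t) * (1 - t) := by nlinarith [sq_nonneg (t - 3 / 4)]
    _ ≤ 2 / π * sin θ + (1 - t) * cos θ := by gcongr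

lemma sq_div_le_one_sub_rhoOf {θ : ℝ} (h0 : 0 ≤ θ) (h1 : θ ≤ π / 2) :
    θ ^ 2 / 100 ≤ 1 - rhoOf θ := by
  have hπ := pi_pos
  have hθ2 : θ ^ 2 ≤ 4 := by nlinarith [pi_lt_four]
  have hhalf : 5 / 12 * θ ≤ sin (θ / 2) :=
    calc 5 / 12 * θ ≤ θ / 2 - (θ / 2) ^ 3 / 6 := by nlinarith
      _ ≤ sin (θ / 2) := sin_ge_sub_cube (by positivity)
  have hcos : 25 / 72 * θ ^ 2 ≤ 1 - cos θ := by
    have := sin_sq_eq_half_sub (θ / 2)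
    rw [show 2 * (θ / 2) = θ by ring] at this
    nlinarith [pow_le_pow_left₀ (by positivity) hhalf 2]
  have hcube : 2 / π * (sin θ - θ * cos θ) ≤ θ ^ 2 / 3 :=
    calc 2 / π * (sin θ - θ * cos θ) ≤ 2 / π * (θ ^ 3 / 3) := by
          gcongr; exact sin_sub_mul_cos_le h0
      _ ≤ θ ^ 2 / 3 := by
          rw [div_mul_eq_mul_div, div_le_iff₀ hπ]
          nlinarith [mul_nonneg (sq_nonneg θ) (by linarith : 0 ≤ π - 2 * θ)]
  have hrho : 1 - rhoOf θ = (1 - cos θ) - 2 / π * (sin θ - θ * cos θ) := by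
    rw [rhoOf]; field_simp; ring
  rw [hrho]
  linarith [sq_nonneg θ]

section Gfun

variable {θ : ℝ}

lemma cos_gfun (h0 : 0 ≤ θ) (h1 : θ ≤ π) :
    cos (gfun θ) = ((π - θ) * cos θ + sin θ) / π := by
  have hπ := pi_pos
  have hs0 : 0 ≤ sin θ := sin_nonneg_of_nonneg_of_le_pi h0 h1
  have hs1 : sin θ ≤ θ := sin_le h0
  have hc0 := neg_one_le_cos θ
  have hc1 := cos_le_one θ
  refine cos_arccos ?_ ?_
  · rw [le_div_iff₀ hπ]; nlinarith
  · rw [div_le_one hπ]; nlinarith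

lemma gfun_mem_Ioc (h0 : 0 < θ) (h1 : θ ≤ π / 2) : gfun θ ∈ Set.Ioc 0 (π / 2) := by
  have hπ := pi_pos
  have hc0 : 0 ≤ cos θ := cos_nonneg_of_mem_Icc ⟨by linarith, h1⟩
  have hs0 : 0 ≤ sin θ := sin_nonneg_of_nonneg_of_le_pi h0.le (by linarith)
  constructor
  · rw [gfun, arccos_pos, div_lt_one hπ]
    nlinarith [sin_lt h0, cos_le_one θ]
  · rw [gfun, arccos_le_pi_div_two]
    have : 0 ≤ π - θ := by linarith
    positivity

lemma sub_le_gfun (h0 : 0 < θ) (h1 : θ ≤ π / 2) : θ - π / 6 * θ ^ 2 ≤ gfun θ := by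
  have hπ := pi_pos
  obtain ⟨hg0, -⟩ := gfun_mem_Ioc h0 h1
  rcases le_or_gt θ (gfun θ) with hle | hlt
  · nlinarith
  have hcos : cos (gfun θ) - cos θ = (sin θ - θ * cos θ) / π := by
    rw [cos_gfun h0.le (by linarith)]; field_simp; ring
  have key : 2 * θ * (θ - gfun θ) / π ^ 2 ≤ θ ^ 3 / 3 / π :=
    calc 2 * θ * (θ - gfun θ) / π ^ 2 ≤ cos (gfun θ) - cos θ :=
          mul_sub_le_cos_sub_cos hg0.le hlt.le h1
      _ ≤ θ ^ 3 / 3 / π := by rw [hcos]; gcongr; exact sin_sub_mul_cos_le h0.le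
  rw [div_le_div_iff₀ (by positivity) hπ] at key
  nlinarith [mul_pos h0 hπ]

lemma one_le_mul_gfun {m : ℝ} (h0 : 0 < θ) (h1 : θ ≤ π / 2) (hmθ : 1 ≤ m * θ) :
    1 ≤ (m + 4) * gfun θ := by
  have hπu : π < 3.15 := pi_lt_d2
  have hπl : 3 < π := pi_gt_three
  have hpos : 0 < 1 - π / 6 * θ := by nlinarith
  have key : 1 ≤ (m + 4) * (θ - π / 6 * θ ^ 2) := by
    nlinarith [mul_nonneg (sub_nonneg.mpr hmθ) hpos.le, mul_pos h0 hpos]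
  nlinarith [sub_le_gfun h0 h1]

end Gfun

lemma thetaCheck_one : thetaCheck 1 = π / 2 := by
  rw [thetaCheck, thetaCheck, gfun, sin_pi, cos_pi, sub_self, zero_mul, add_zero, zero_div,
    arccos_zero]

lemma thetaCheck_two : thetaCheck 2 = arccos (1 / π) := by
  rw [thetaCheck, thetaCheck_one, gfun, cos_pi_div_two, sin_pi_div_two, mul_zero, zero_add]

lemma thetaCheck_mem_Ioc {d : ℕ} (hd : 1 ≤ d) : thetaCheck d ∈ Set.Ioc 0 (π / 2) := by
  induction d, hd using Nat.le_induction with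
  | base => rw [thetaCheck_one]; exact ⟨by positivity, le_rfl⟩
  | succ d _ ih => exact gfun_mem_Ioc ih.1 ih.2

lemma sum_eq_cos_thetaCheck {d : ℕ} (hd : 1 ≤ d) :
    ∑ i ∈ Finset.range d, sin (thetaCheck i) / π *
      ∏ j ∈ Finset.Ico (i + 1) d, (π - thetaCheck j) / π = cos (thetaCheck d) := by
  induction d, hd using Nat.le_induction with
  | base => simp [thetaCheck_one, show thetaCheck 0 = π from rfl]
  | succ d hd ih =>
    have hprod (i : ℕ) (hi : i ∈ Finset.range d) :
        sin (thetaCheck i) / π * ∏ j ∈ Finset.Ico (i + 1) (d + 1), (π - thetaCheck j) / π =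
          sin (thetaCheck i) / π * (∏ j ∈ Finset.Ico (i + 1) d, (π - thetaCheck j) / π) *
            ((π - thetaCheck d) / π) := by
      rw [Finset.prod_Ico_succ_top (Finset.mem_range.mp hi), mul_assoc]
    obtain ⟨h0, h1⟩ := thetaCheck_mem_Ioc hd
    rw [Finset.sum_range_succ, Finset.sum_congr rfl hprod, ← Finset.sum_mul, ih,
      Finset.Ico_self, Finset.prod_empty, thetaCheck, cos_gfun h0.le (by linarith [pi_pos])]
    field_simp

lemma rho_eq_rhoOf {d : ℕ} (hd : 1 ≤ d) : rho d = rhoOf (thetaCheck d) := by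
  rw [rho, sum_eq_cos_thetaCheck hd, rhoOf]

lemma one_le_thetaCheck_two : 1 ≤ thetaCheck 2 := by
  have hcos : 1 / π ≤ cos 1 := by
    have := one_sub_sq_div_two_le_cos (x := 1)
    rw [div_le_iff₀ pi_pos]
    nlinarith [pi_gt_three]
  rw [thetaCheck_two]
  exact (arccos_cos zero_le_one (by linarith [pi_gt_three])).ge.trans (arccos_le_arccos hcos)

lemma one_le_mul_thetaCheck {d : ℕ} (hd : 2 ≤ d) : 1 ≤ (4 * d - 7 : ℝ) * thetaCheck d := by
  induction d, hd using Nat.le_induction with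
  | base => norm_num [one_le_thetaCheck_two]
  | succ d hd ih =>
    obtain ⟨h0, h1⟩ := thetaCheck_mem_Ioc (by omega : 1 ≤ d)
    have := one_le_mul_gfun h0 h1 ih
    push_cast
    convert this using 1
    rw [thetaCheck]
    ring

/-- `ρ_d` is bounded below away from `0` and bounded away from `1`
by `1/(C(d+2)²)`, uniformly over `d ≥ 2`. -/
theorem statement_10 :
    (∃ κ > (0 : ℝ), ∀ d : ℕ, 2 ≤ d → κ ≤ rho d) ∧
    ∃ C > (0 : ℝ), ∀ d : ℕ, 2 ≤ d → 1 / (C * ((d : ℝ) + 2) ^ 2) ≤ 1 - rho d := by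
  constructor
  · refine ⟨1 / 4, by norm_num, fun d hd => ?_⟩
    obtain ⟨h0, h1⟩ := thetaCheck_mem_Ioc (by omega : 1 ≤ d)
    rw [rho_eq_rhoOf (by omega)]
    exact quarter_le_rhoOf h0.le h1
  · refine ⟨1600, by norm_num, fun d hd => ?_⟩
    obtain ⟨h0, h1⟩ := thetaCheck_mem_Ioc (by omega : 1 ≤ d)
    have hd' : (2 : ℝ) ≤ d := by exact_mod_cast hd
    have hθ : 1 ≤ 4 * ((d : ℝ) + 2) * thetaCheck d := by
      nlinarith [one_le_mul_thetaCheck hd]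
    rw [rho_eq_rhoOf (by omega)]
    calc 1 / (1600 * ((d : ℝ) + 2) ^ 2) ≤ thetaCheck d ^ 2 / 100 := by
          rw [div_le_div_iff₀ (by positivity) (by norm_num)]
          nlinarith
      _ ≤ 1 - rhoOf (thetaCheck d) := sq_div_le_one_sub_rhoOf h0.le h1

end DPR
end
end

section
/- For all nonzero x, y ∈ ℝ^k, ‖h_x − h_y‖ ≤ (((2d² + (10π + 8)d + 20π)‖x_*‖)/(π² 2^d) · max(1/‖x‖, 1/‖y‖) + 1/2^d) ‖x − y‖. In particular, if x, y ∉ B(0, r‖x_*‖) for some r > 0, then ‖h_x − h_y‖ ≤ ((2d² + (10π + 8)d + 20π)/(r π² 2^d) + 1/2^d) ‖x − y‖. -/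
open scoped BigOperators ENNReal NNReal RealInnerProductSpace Matrix
open MeasureTheory ProbabilityTheory Real Filter

noncomputable section

namespace DPR

attribute [local instance] Classical.propDecidable

/-!
Write `θ̄ = (θ̄ᵢ)` for the angle sequence of `x`. Then
`h_x = 2⁻ᵈ (x + ‖x⋆‖ (F(θ̄) x̂⋆ - R(θ̄) x̂))`, where `F = starCoeff d` and `R = radialCoeff d` are
built from the numbers `(π - θ̄ᵢ) / π`, `(π - 2θ̄_d) / π` and `sin θ̄ᵢ`, all bounded by `1` in
absolute value and Lipschitz in `θ̄ᵢ`. Telescoping the products shows that `F` and `R` are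
Lipschitz in the sup-norm of the angle sequence, with constants linear and quadratic in `d`.
The angle sequence itself moves by at most `π ‖x - y‖ / min(‖x‖, ‖y‖)`: for `θ̄₀ = ∠(x, x⋆)`
this follows from the triangle inequality for angles and the chord bound
`∠(u, v) ≤ (π / 2) ‖u - v‖` on the unit sphere, and it propagates because `0 ≤ g' ≤ 1` on
`(0, π)`. Together with `‖x̂ - ŷ‖ ≤ 2 ‖x - y‖ / max(‖x‖, ‖y‖)` this gives the bound.
-/

section ArccosMap

lemma sin_mul_sin_add_two_mul_cos_le {θ : ℝ} (h0 : 0 ≤ θ) (h1 : θ ≤ π) :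
    sin θ * (sin θ + 2 * (π - θ) * cos θ) ≤ θ * (2 * π - θ) := by
  have hsin_nonneg : 0 ≤ sin θ := sin_nonneg_of_nonneg_of_le_pi h0 h1
  have hsin_le : sin θ ≤ θ := sin_le h0
  rcases le_or_gt (sin θ + 2 * (π - θ) * cos θ) 0 with h | h
  · nlinarith [mul_nonpos_of_nonneg_of_nonpos hsin_nonneg h]
  · have h2 : sin θ + 2 * (π - θ) * cos θ ≤ 2 * π - θ := by nlinarith [cos_le_one θ]
    nlinarith [mul_le_mul hsin_le h2 h.le h0]

/-- `((π - θ) cos θ + sin θ, (π - θ) sin θ)` lies in the disc of radius `π`; this is exactly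
`|g'| ≤ 1`. -/
lemma sq_add_sq_le_pi_sq {θ : ℝ} (h0 : 0 ≤ θ) (h1 : θ ≤ π) :
    ((π - θ) * cos θ + sin θ) ^ 2 + ((π - θ) * sin θ) ^ 2 ≤ π ^ 2 := by
  have hexpand : ((π - θ) * cos θ + sin θ) ^ 2 + ((π - θ) * sin θ) ^ 2
      = (π - θ) ^ 2 * (sin θ ^ 2 + cos θ ^ 2) + sin θ * (sin θ + 2 * (π - θ) * cos θ) := by ring
  rw [hexpand, sin_sq_add_cos_sq]
  nlinarith [sin_mul_sin_add_two_mul_cos_le h0 h1]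

lemma hasDerivAt_gfun {θ : ℝ} (h0 : 0 < θ) (h1 : θ < π) :
    HasDerivAt gfun ((π - θ) * sin θ / π / √(1 - (((π - θ) * cos θ + sin θ) / π) ^ 2)) θ := by
  have hπ := pi_pos
  have hlt : ((π - θ) * cos θ + sin θ) / π < 1 := by
    rw [div_lt_one hπ]
    nlinarith [sin_lt h0, cos_le_one θ]
  have hgt : -1 < ((π - θ) * cos θ + sin θ) / π := by
    rw [lt_div_iff₀ hπ]
    nlinarith [neg_one_le_cos θ, sin_nonneg_of_nonneg_of_le_pi h0.le h1.le]
  have hu : HasDerivAt (fun t => ((π - t) * cos t + sin t) / π) (-((π - θ) * sin θ) / π) θ :=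
    (((((hasDerivAt_id' θ).const_sub π).mul (hasDerivAt_cos θ)).add
      (hasDerivAt_sin θ)).div_const π).congr_deriv (by ring)
  exact ((hasDerivAt_arccos hgt.ne' hlt.ne).comp θ hu).congr_deriv (by ring)

lemma deriv_gfun_mem_Icc {θ : ℝ} (h0 : 0 < θ) (h1 : θ < π) :
    deriv gfun θ ∈ Set.Icc 0 1 := by
  have hπ := pi_pos
  rw [(hasDerivAt_gfun h0 h1).deriv]
  have hnum : 0 ≤ (π - θ) * sin θ / π :=
    div_nonneg (mul_nonneg (by linarith) (sin_nonneg_of_nonneg_of_le_pi h0.le h1.le)) hπ.le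
  have hsq := sq_add_sq_le_pi_sq h0.le h1.le
  refine ⟨div_nonneg hnum (sqrt_nonneg _), div_le_one_of_le₀ ?_ (sqrt_nonneg _)⟩
  rw [le_sqrt hnum, div_pow, div_pow, le_sub_iff_add_le, ← add_div,
    div_le_one (by positivity)]
  · linarith
  · rw [div_pow, sub_nonneg, div_le_one (by positivity)]
    nlinarith

lemma abs_gfun_sub_gfun_le {a b : ℝ} (ha : a ∈ Set.Icc 0 π) (hb : b ∈ Set.Icc 0 π) :
    |gfun a - gfun b| ≤ |a - b| := by
  have hcont : ContinuousOn gfun (Set.Icc 0 π) :=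
    (continuous_arccos.comp (by fun_prop)).continuousOn
  have hdiff : DifferentiableOn ℝ gfun (interior (Set.Icc 0 π)) := by
    rw [interior_Icc]
    exact fun θ hθ => (hasDerivAt_gfun hθ.1 hθ.2).differentiableAt.differentiableWithinAt
  have hderiv : ∀ θ ∈ interior (Set.Icc 0 π), deriv gfun θ ∈ Set.Icc 0 1 := by
    rw [interior_Icc]
    exact fun θ hθ => deriv_gfun_mem_Icc hθ.1 hθ.2
  have key : ∀ u ∈ Set.Icc 0 π, ∀ v ∈ Set.Icc 0 π, u ≤ v → |gfun v - gfun u| ≤ v - u := by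
    intro u hu v hv huv
    have hmono := (convex_Icc 0 π).mul_sub_le_image_sub_of_le_deriv hcont hdiff
      (fun θ hθ => (hderiv θ hθ).1) u hu v hv huv
    have hlip := (convex_Icc 0 π).image_sub_le_mul_sub_of_deriv_le hcont hdiff
      (fun θ hθ => (hderiv θ hθ).2) u hu v hv huv
    rw [abs_le]
    constructor <;> linarith
  rcases le_total a b with hab | hab
  · rw [abs_sub_comm, abs_sub_comm a, abs_of_nonneg (sub_nonneg.2 hab)]
    exact key a ha b hb hab
  · rw [abs_of_nonneg (sub_nonneg.2 hab)]
    exact key b hb a ha hab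

end ArccosMap

section Normalize

open NormedSpace

variable {V : Type*} [NormedAddCommGroup V] [NormedSpace ℝ V]

lemma norm_normalize_le (x : V) : ‖normalize x‖ ≤ 1 := by
  rcases eq_or_ne x 0 with rfl | hx
  · simp
  · exact (norm_normalize_eq_one_iff.2 hx).le

lemma norm_smul_normalize_le (c : ℝ) (x : V) : ‖c • normalize x‖ ≤ |c| := by
  rw [norm_smul, Real.norm_eq_abs]
  exact mul_le_of_le_one_right (abs_nonneg c) (norm_normalize_le x)

lemma norm_normalize_sub_normalize_le_of_norm_le {x y : V} (hy : y ≠ 0) (h : ‖y‖ ≤ ‖x‖) :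
    ‖normalize x - normalize y‖ ≤ 2 * ‖x‖⁻¹ * ‖x - y‖ := by
  have hy0 : 0 < ‖y‖ := norm_pos_iff.2 hy
  have hx0 : 0 < ‖x‖ := hy0.trans_le h
  have hsplit : normalize x - normalize y = ‖x‖⁻¹ • (x - y) - (‖y‖⁻¹ - ‖x‖⁻¹) • y := by
    simp only [NormedSpace.normalize]
    module
  have hshrink : ‖(‖y‖⁻¹ - ‖x‖⁻¹) • y‖ = ‖x‖⁻¹ * (‖x‖ - ‖y‖) := by
    rw [norm_smul, norm_of_nonneg (sub_nonneg.2 (inv_anti₀ hy0 h))]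
    field_simp
  calc ‖normalize x - normalize y‖
      ≤ ‖‖x‖⁻¹ • (x - y)‖ + ‖(‖y‖⁻¹ - ‖x‖⁻¹) • y‖ := hsplit ▸ norm_sub_le _ _
    _ = ‖x‖⁻¹ * ‖x - y‖ + ‖x‖⁻¹ * (‖x‖ - ‖y‖) := by
        rw [hshrink, norm_smul, norm_inv, norm_norm]
    _ ≤ ‖x‖⁻¹ * ‖x - y‖ + ‖x‖⁻¹ * ‖x - y‖ := by
        gcongr
        exact norm_sub_norm_le x y
    _ = 2 * ‖x‖⁻¹ * ‖x - y‖ := by ring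

lemma norm_normalize_sub_normalize_le {x y : V} (hx : x ≠ 0) (hy : y ≠ 0) :
    ‖normalize x - normalize y‖ ≤ 2 * max ‖x‖⁻¹ ‖y‖⁻¹ * ‖x - y‖ := by
  rcases le_total ‖y‖ ‖x‖ with h | h
  · refine (norm_normalize_sub_normalize_le_of_norm_le hy h).trans ?_
    gcongr
    exact le_max_left _ _
  · rw [norm_sub_rev, norm_sub_rev x]
    refine (norm_normalize_sub_normalize_le_of_norm_le hx h).trans ?_
    gcongr
    exact le_max_right _ _

end Normalize

section Angles

open InnerProductGeometry NormedSpace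

variable {V : Type*} [NormedAddCommGroup V] [InnerProductSpace ℝ V]

/-- The chord of angle `θ` on the unit sphere has length `2 sin (θ / 2) ≥ 2θ / π` (Jordan). -/
lemma angle_le_pi_div_two_mul_norm_sub {u v : V} (hu : ‖u‖ = 1) (hv : ‖v‖ = 1) :
    angle u v ≤ π / 2 * ‖u - v‖ := by
  have hπ := pi_pos
  set θ := angle u v
  have hθ : 0 ≤ θ := angle_nonneg u v
  have hjordan : 2 / π * (θ / 2) ≤ sin (θ / 2) :=
    mul_le_sin (by linarith) (by linarith [angle_le_pi u v])
  have hchord : ‖u - v‖ ^ 2 = (2 * sin (θ / 2)) ^ 2 := by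
    rw [sq ‖u - v‖, norm_sub_sq_eq_norm_sq_add_norm_sq_sub_two_mul_norm_mul_norm_mul_cos_angle,
      hu, hv, mul_pow, sin_sq_eq_half_sub, show 2 * (θ / 2) = θ by ring]
    ring
  have hsin : 0 ≤ 2 * sin (θ / 2) := by nlinarith [show 0 ≤ 2 / π * (θ / 2) by positivity]
  have hnorm : 2 * sin (θ / 2) = ‖u - v‖ := (sq_eq_sq₀ hsin (norm_nonneg _)).1 hchord.symm
  calc θ = π / 2 * (2 * (2 / π * (θ / 2))) := by field_simp
    _ ≤ π / 2 * ‖u - v‖ := by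
        gcongr
        linarith

lemma angle_le_pi_mul_max_inv_mul_norm_sub {x y : V} (hx : x ≠ 0) (hy : y ≠ 0) :
    angle x y ≤ π * max ‖x‖⁻¹ ‖y‖⁻¹ * ‖x - y‖ := by
  calc angle x y = angle (normalize x) (normalize y) := by
        rw [angle_normalize_left, angle_normalize_right]
    _ ≤ π / 2 * ‖normalize x - normalize y‖ :=
        angle_le_pi_div_two_mul_norm_sub (norm_normalize_eq_one_iff.2 hx)
          (norm_normalize_eq_one_iff.2 hy)
    _ ≤ π / 2 * (2 * max ‖x‖⁻¹ ‖y‖⁻¹ * ‖x - y‖) := by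
        gcongr
        exact norm_normalize_sub_normalize_le hx hy
    _ = π * max ‖x‖⁻¹ ‖y‖⁻¹ * ‖x - y‖ := by ring

lemma abs_angle_sub_angle_le (x y z : V) : |angle x z - angle y z| ≤ angle x y := by
  have h1 := angle_le_angle_add_angle x y z
  have h2 := angle_le_angle_add_angle y x z
  rw [angle_comm y x] at h2
  rw [abs_le]
  constructor <;> linarith

end Angles

section Coefficients

open Finset

lemma abs_mul_sub_mul_le (a b c e : ℝ) : |a * c - b * e| ≤ |a - b| * |c| + |b| * |c - e| := by
  rw [show a * c - b * e = (a - b) * c + b * (c - e) by ring, ← abs_mul, ← abs_mul]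
  exact abs_add_le _ _

lemma abs_prod_sub_prod_le_sum_abs_sub {ι : Type*} (s : Finset ι) {f g : ι → ℝ}
    (hf : ∀ i ∈ s, |f i| ≤ 1) (hg : ∀ i ∈ s, |g i| ≤ 1) :
    |∏ i ∈ s, f i - ∏ i ∈ s, g i| ≤ ∑ i ∈ s, |f i - g i| := by
  induction s using Finset.cons_induction with
  | empty => simp
  | cons j s hj ih =>
    simp only [mem_cons, forall_eq_or_imp] at hf hg
    rw [prod_cons, prod_cons, sum_cons]
    have hprod : |∏ i ∈ s, f i| ≤ 1 := by
      rw [abs_prod]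
      exact prod_le_one (fun _ _ => abs_nonneg _) hf.2
    calc |f j * ∏ i ∈ s, f i - g j * ∏ i ∈ s, g i|
        ≤ |f j - g j| * |∏ i ∈ s, f i| + |g j| * |∏ i ∈ s, f i - ∏ i ∈ s, g i| :=
          abs_mul_sub_mul_le _ _ _ _
      _ ≤ |f j - g j| * 1 + 1 * ∑ i ∈ s, |f i - g i| := by
          gcongr
          · exact hg.1
          · exact ih hf.2 hg.2
      _ = |f j - g j| + ∑ i ∈ s, |f i - g i| := by ring

lemma sum_range_card_Ico_succ (d : ℕ) :
    ∑ i ∈ range d, (#(Ico (i + 1) d) : ℝ) = d * (d - 1) / 2 := by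
  have hreflect : ∑ i ∈ range d, #(Ico (i + 1) d) = ∑ i ∈ range d, i := by
    rw [← sum_range_reflect]
    refine sum_congr rfl fun i hi => ?_
    rw [Nat.card_Ico]
    have := mem_range.1 hi
    omega
  rw [← Nat.cast_sum, hreflect, sum_range_id, ← Nat.choose_two_right, Nat.cast_choose_two]

variable {S T : ℕ → ℝ} {δ : ℝ}

lemma abs_pi_sub_div_pi_le_one {t : ℝ} (ht : t ∈ Set.Icc 0 π) : |(π - t) / π| ≤ 1 := by
  rw [abs_div, abs_of_pos pi_pos, div_le_one pi_pos, abs_le]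
  constructor <;> linarith [ht.1, ht.2]

lemma abs_pi_sub_two_mul_div_pi_le_one {t : ℝ} (ht : t ∈ Set.Icc 0 π) :
    |(π - 2 * t) / π| ≤ 1 := by
  rw [abs_div, abs_of_pos pi_pos, div_le_one pi_pos, abs_le]
  constructor <;> linarith [ht.1, ht.2]

lemma abs_prod_pi_sub_div_pi_le_one (s : Finset ℕ) (hT : ∀ i, T i ∈ Set.Icc 0 π) :
    |∏ i ∈ s, (π - T i) / π| ≤ 1 := by
  rw [abs_prod]
  exact prod_le_one (fun _ _ => abs_nonneg _) fun i _ => abs_pi_sub_div_pi_le_one (hT i)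

lemma abs_prod_pi_sub_div_pi_sub_le (s : Finset ℕ) (hS : ∀ i, S i ∈ Set.Icc 0 π)
    (hT : ∀ i, T i ∈ Set.Icc 0 π) (hST : ∀ i, |S i - T i| ≤ δ) :
    |∏ i ∈ s, (π - S i) / π - ∏ i ∈ s, (π - T i) / π| ≤ #s * (δ / π) := by
  refine (abs_prod_sub_prod_le_sum_abs_sub s (fun i _ => abs_pi_sub_div_pi_le_one (hS i))
    fun i _ => abs_pi_sub_div_pi_le_one (hT i)).trans ?_
  rw [← nsmul_eq_mul, ← sum_const]
  refine sum_le_sum fun i _ => ?_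
  rw [show (π - S i) / π - (π - T i) / π = (T i - S i) / π by ring, abs_div, abs_of_pos pi_pos,
    abs_sub_comm]
  gcongr
  exact hST i

def tailSum (d : ℕ) (T : ℕ → ℝ) : ℝ :=
  ∑ i ∈ range d, sin (T i) / π * ∏ j ∈ Ico (i + 1) d, (π - T j) / π

def starCoeff (d : ℕ) (T : ℕ → ℝ) : ℝ :=
  (π - 2 * T d) / π * ∏ i ∈ range d, (π - T i) / π

def radialCoeff (d : ℕ) (T : ℕ → ℝ) : ℝ :=
  2 * sin (T d) / π + (π - 2 * T d) / π * tailSum d T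

lemma abs_tailSum_le (d : ℕ) (hT : ∀ i, T i ∈ Set.Icc 0 π) : |tailSum d T| ≤ d / π := by
  refine (abs_sum_le_sum_abs _ _).trans ?_
  calc ∑ i ∈ range d, |sin (T i) / π * ∏ j ∈ Ico (i + 1) d, (π - T j) / π|
      ≤ ∑ _i ∈ range d, 1 / π * 1 := by
        refine sum_le_sum fun i _ => ?_
        rw [abs_mul, abs_div, abs_of_pos pi_pos]
        gcongr
        · exact abs_sin_le_one _
        · exact abs_prod_pi_sub_div_pi_le_one _ hT
    _ = d / π := by
        rw [sum_const, card_range, nsmul_eq_mul]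
        ring

lemma abs_tailSum_sub_le (d : ℕ) (hS : ∀ i, S i ∈ Set.Icc 0 π) (hT : ∀ i, T i ∈ Set.Icc 0 π)
    (hST : ∀ i, |S i - T i| ≤ δ) :
    |tailSum d S - tailSum d T| ≤ d * (δ / π) + d * (d - 1) / 2 * (δ / π ^ 2) := by
  have hδ : 0 ≤ δ := (abs_nonneg _).trans (hST 0)
  rw [tailSum, tailSum, ← sum_sub_distrib]
  refine (abs_sum_le_sum_abs _ _).trans ?_
  calc ∑ i ∈ range d, |sin (S i) / π * ∏ j ∈ Ico (i + 1) d, (π - S j) / π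
        - sin (T i) / π * ∏ j ∈ Ico (i + 1) d, (π - T j) / π|
      ≤ ∑ i ∈ range d, (δ / π * 1 + 1 / π * (#(Ico (i + 1) d) * (δ / π))) := by
        refine sum_le_sum fun i _ => (abs_mul_sub_mul_le _ _ _ _).trans ?_
        rw [← sub_div, abs_div, abs_div, abs_of_pos pi_pos]
        gcongr
        · exact (abs_sin_sub_sin_le _ _).trans (hST i)
        · exact abs_prod_pi_sub_div_pi_le_one _ hS
        · exact abs_sin_le_one _
        · exact abs_prod_pi_sub_div_pi_sub_le _ hS hT hST
    _ = d * (δ / π) + d * (d - 1) / 2 * (δ / π ^ 2) := by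
        rw [sum_add_distrib, sum_const, card_range, nsmul_eq_mul, ← mul_sum, ← sum_mul,
          sum_range_card_Ico_succ]
        ring

lemma abs_starCoeff_sub_le (d : ℕ) (hS : ∀ i, S i ∈ Set.Icc 0 π) (hT : ∀ i, T i ∈ Set.Icc 0 π)
    (hST : ∀ i, |S i - T i| ≤ δ) :
    |starCoeff d S - starCoeff d T| ≤ (2 + d) * δ / π := by
  have hδ : 0 ≤ δ := (abs_nonneg _).trans (hST 0)
  refine (abs_mul_sub_mul_le _ _ _ _).trans ?_
  calc |(π - 2 * S d) / π - (π - 2 * T d) / π| * |∏ i ∈ range d, (π - S i) / π|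
        + |(π - 2 * T d) / π| * |∏ i ∈ range d, (π - S i) / π - ∏ i ∈ range d, (π - T i) / π|
      ≤ 2 * δ / π * 1 + 1 * (d * (δ / π)) := by
        gcongr
        · rw [show (π - 2 * S d) / π - (π - 2 * T d) / π = 2 * (T d - S d) / π by ring,
            abs_div, abs_mul, abs_two, abs_of_pos pi_pos, abs_sub_comm]
          gcongr
          exact hST d
        · exact abs_prod_pi_sub_div_pi_le_one _ hS
        · exact abs_pi_sub_two_mul_div_pi_le_one (hT d)
        · simpa using abs_prod_pi_sub_div_pi_sub_le (range d) hS hT hST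
    _ = (2 + d) * δ / π := by ring

lemma abs_radialCoeff_le (d : ℕ) (hT : ∀ i, T i ∈ Set.Icc 0 π) :
    |radialCoeff d T| ≤ (2 + d) / π := by
  refine (abs_add_le _ _).trans ?_
  rw [abs_mul, abs_div, abs_mul, abs_two, abs_of_pos pi_pos]
  calc 2 * |sin (T d)| / π + |(π - 2 * T d) / π| * |tailSum d T| ≤ 2 * 1 / π + 1 * (d / π) := by
        gcongr
        · exact abs_sin_le_one _
        · exact abs_pi_sub_two_mul_div_pi_le_one (hT d)
        · exact abs_tailSum_le d hT
    _ = (2 + d) / π := by ring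

lemma abs_radialCoeff_sub_le (d : ℕ) (hS : ∀ i, S i ∈ Set.Icc 0 π)
    (hT : ∀ i, T i ∈ Set.Icc 0 π) (hST : ∀ i, |S i - T i| ≤ δ) :
    |radialCoeff d S - radialCoeff d T|
      ≤ (2 + 2 * d / π + d + d * (d - 1) / (2 * π)) * δ / π := by
  have hδ : 0 ≤ δ := (abs_nonneg _).trans (hST 0)
  rw [radialCoeff, radialCoeff, add_sub_add_comm]
  refine (abs_add_le _ _).trans ?_
  calc |2 * sin (S d) / π - 2 * sin (T d) / π|
        + |(π - 2 * S d) / π * tailSum d S - (π - 2 * T d) / π * tailSum d T|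
      ≤ 2 * δ / π + (2 * δ / π * (d / π) + 1 * (d * (δ / π) + d * (d - 1) / 2 * (δ / π ^ 2))) := by
        gcongr
        · rw [← sub_div, ← mul_sub, abs_div, abs_mul, abs_two, abs_of_pos pi_pos]
          gcongr
          exact (abs_sin_sub_sin_le _ _).trans (hST d)
        · refine (abs_mul_sub_mul_le _ _ _ _).trans ?_
          gcongr
          · rw [show (π - 2 * S d) / π - (π - 2 * T d) / π = 2 * (T d - S d) / π by ring,
              abs_div, abs_mul, abs_two, abs_of_pos pi_pos, abs_sub_comm]
            gcongr
            exact hST d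
          · exact abs_tailSum_le d hS
          · exact abs_pi_sub_two_mul_div_pi_le_one (hT d)
          · exact abs_tailSum_sub_le d hS hT hST
    _ = (2 + 2 * d / π + d + d * (d - 1) / (2 * π)) * δ / π := by ring

end Coefficients

section Lipschitz

open InnerProductGeometry NormedSpace

variable {k : ℕ}

lemma thetaBar_mem_Icc (xstar x : EuclideanSpace ℝ (Fin k)) (i : ℕ) :
    thetaBar xstar x i ∈ Set.Icc 0 π := by
  cases i <;> exact ⟨arccos_nonneg _, arccos_le_pi _⟩

lemma abs_thetaBar_sub_le (xstar : EuclideanSpace ℝ (Fin k)) {x y : EuclideanSpace ℝ (Fin k)}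
    (hx : x ≠ 0) (hy : y ≠ 0) (i : ℕ) :
    |thetaBar xstar x i - thetaBar xstar y i| ≤ π * max ‖x‖⁻¹ ‖y‖⁻¹ * ‖x - y‖ := by
  induction i with
  | zero =>
    exact (abs_angle_sub_angle_le x y xstar).trans (angle_le_pi_mul_max_inv_mul_norm_sub hx hy)
  | succ i ih =>
    exact (abs_gfun_sub_gfun_le (thetaBar_mem_Icc _ _ i) (thetaBar_mem_Icc _ _ i)).trans ih

lemma hvec_eq (d : ℕ) (xstar x : EuclideanSpace ℝ (Fin k)) :
    hvec d xstar x = ((2 : ℝ) ^ d)⁻¹ •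
      ((starCoeff d (thetaBar xstar x) * ‖xstar‖) • normalize xstar
        + (‖x‖ - ‖xstar‖ * radialCoeff d (thetaBar xstar x)) • normalize x) :=
  rfl

lemma norm_hvec_sub_hvec_le (d : ℕ) (xstar x y : EuclideanSpace ℝ (Fin k)) :
    ‖hvec d xstar x - hvec d xstar y‖ ≤ ((2 : ℝ) ^ d)⁻¹ * (‖x - y‖ + ‖xstar‖ *
      (|starCoeff d (thetaBar xstar x) - starCoeff d (thetaBar xstar y)|
        + |radialCoeff d (thetaBar xstar x) - radialCoeff d (thetaBar xstar y)|
        + |radialCoeff d (thetaBar xstar y)| * ‖normalize x - normalize y‖)) := by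
  set Fx := starCoeff d (thetaBar xstar x)
  set Fy := starCoeff d (thetaBar xstar y)
  set Rx := radialCoeff d (thetaBar xstar x)
  set Ry := radialCoeff d (thetaBar xstar y)
  have hsplit : (Fx * ‖xstar‖) • normalize xstar + (‖x‖ - ‖xstar‖ * Rx) • normalize x
      - ((Fy * ‖xstar‖) • normalize xstar + (‖y‖ - ‖xstar‖ * Ry) • normalize y)
      = (x - y) + ((‖xstar‖ * (Fx - Fy)) • normalize xstar
        - ((‖xstar‖ * (Rx - Ry)) • normalize x
          + (‖xstar‖ * Ry) • (normalize x - normalize y))) := by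
    rw [sub_smul, sub_smul, norm_smul_normalize, norm_smul_normalize]
    module
  rw [hvec_eq, hvec_eq, ← smul_sub, norm_smul, norm_inv, norm_pow, Real.norm_two, hsplit]
  gcongr
  calc ‖(x - y) + ((‖xstar‖ * (Fx - Fy)) • normalize xstar
        - ((‖xstar‖ * (Rx - Ry)) • normalize x + (‖xstar‖ * Ry) • (normalize x - normalize y)))‖
      ≤ ‖x - y‖ + (‖(‖xstar‖ * (Fx - Fy)) • normalize xstar‖
        + (‖(‖xstar‖ * (Rx - Ry)) • normalize x‖
          + ‖(‖xstar‖ * Ry) • (normalize x - normalize y)‖)) :=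
        (norm_add_le _ _).trans (add_le_add le_rfl ((norm_sub_le _ _).trans
          (add_le_add le_rfl (norm_add_le _ _))))
    _ ≤ ‖x - y‖ + (|‖xstar‖ * (Fx - Fy)| + (|‖xstar‖ * (Rx - Ry)|
        + |‖xstar‖ * Ry| * ‖normalize x - normalize y‖)) := by
        rw [norm_smul _ (normalize x - normalize y), Real.norm_eq_abs]
        gcongr <;> exact norm_smul_normalize_le _ _
    _ = _ := by
        rw [abs_mul, abs_mul, abs_mul, abs_norm]
        ring

lemma lipschitz_coeff_le {D : ℝ} (hD : 0 ≤ D) :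
    2 * D + 4 + (4 + 4 * D + D * (D - 1) / 2) / π
      ≤ (2 * D ^ 2 + (10 * π + 8) * D + 20 * π) / π ^ 2 := by
  have hπ := pi_pos
  have hexpand : (2 * D + 4 + (4 + 4 * D + D * (D - 1) / 2) / π) * π ^ 2
      = (2 * D + 4) * π ^ 2 + (4 + 4 * D + D * (D - 1) / 2) * π := by
    field_simp
  rw [le_div_iff₀ (by positivity), hexpand]
  have hD2 : 0 ≤ (2 - π / 2) * D ^ 2 := mul_nonneg (by linarith [pi_lt_four]) (sq_nonneg D)
  have hD1 : 0 ≤ (10 * π + 8 - 2 * π ^ 2 - 4 * π + π / 2) * D :=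
    mul_nonneg (by nlinarith [pi_lt_d2, pi_gt_three]) hD
  have hD0 : 0 ≤ 20 * π - 4 * π ^ 2 - 4 * π := by nlinarith [pi_lt_d2, pi_gt_three]
  linarith

lemma norm_hvec_sub_hvec_le_mul (d : ℕ) (xstar : EuclideanSpace ℝ (Fin k))
    {x y : EuclideanSpace ℝ (Fin k)} (hx : x ≠ 0) (hy : y ≠ 0) :
    ‖hvec d xstar x - hvec d xstar y‖ ≤
      ((2 * (d : ℝ) ^ 2 + (10 * π + 8) * d + 20 * π) * ‖xstar‖ / (π ^ 2 * 2 ^ d)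
        * max ‖x‖⁻¹ ‖y‖⁻¹ + 1 / 2 ^ d) * ‖x - y‖ := by
  set M := max ‖x‖⁻¹ ‖y‖⁻¹
  set N := ‖x - y‖
  have hθ := abs_thetaBar_sub_le xstar hx hy
  have hmem := thetaBar_mem_Icc xstar
  have hF := abs_starCoeff_sub_le d (hmem x) (hmem y) hθ
  have hR := abs_radialCoeff_sub_le d (hmem x) (hmem y) hθ
  have hRy := abs_radialCoeff_le d (hmem y)
  have hnormalize := norm_normalize_sub_normalize_le hx hy
  have hMN : 0 ≤ M * N := mul_nonneg ((inv_nonneg.2 (norm_nonneg x)).trans (le_max_left _ _))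
    (norm_nonneg _)
  have hcoeff := lipschitz_coeff_le (Nat.cast_nonneg d)
  refine (norm_hvec_sub_hvec_le d xstar x y).trans ?_
  calc ((2 : ℝ) ^ d)⁻¹ * (N + ‖xstar‖ * (|starCoeff d (thetaBar xstar x)
          - starCoeff d (thetaBar xstar y)| + |radialCoeff d (thetaBar xstar x)
          - radialCoeff d (thetaBar xstar y)| + |radialCoeff d (thetaBar xstar y)|
          * ‖NormedSpace.normalize x - NormedSpace.normalize y‖))
      ≤ ((2 : ℝ) ^ d)⁻¹ * (N + ‖xstar‖ * ((2 + d) * (π * M * N) / π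
          + (2 + 2 * d / π + d + d * (d - 1) / (2 * π)) * (π * M * N) / π
          + (2 + d) / π * (2 * M * N))) := by gcongr
    _ = ((2 : ℝ) ^ d)⁻¹ * (N + ‖xstar‖ * (M * N)
          * (2 * d + 4 + (4 + 4 * d + d * (d - 1) / 2) / π)) := by
        field_simp
        ring
    _ ≤ ((2 : ℝ) ^ d)⁻¹ * (N + ‖xstar‖ * (M * N)
          * ((2 * d ^ 2 + (10 * π + 8) * d + 20 * π) / π ^ 2)) := by gcongr
    _ = _ := by
        field_simp
        ring

end Lipschitz

theorem statement_11_general {k d : ℕ} (xstar : EuclideanSpace ℝ (Fin k)) :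
    (∀ x y : EuclideanSpace ℝ (Fin k), x ≠ 0 → y ≠ 0 →
      ‖hvec d xstar x - hvec d xstar y‖ ≤
        ((2 * (d : ℝ) ^ 2 + (10 * π + 8) * d + 20 * π) * ‖xstar‖ / (π ^ 2 * 2 ^ d)
            * max ‖x‖⁻¹ ‖y‖⁻¹ + 1 / 2 ^ d) * ‖x - y‖) ∧
    ∀ r : ℝ, 0 < r → ∀ x y : EuclideanSpace ℝ (Fin k),
      x ∉ Metric.closedBall 0 (r * ‖xstar‖) → y ∉ Metric.closedBall 0 (r * ‖xstar‖) →
      ‖hvec d xstar x - hvec d xstar y‖ ≤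
        ((2 * (d : ℝ) ^ 2 + (10 * π + 8) * d + 20 * π) / (r * π ^ 2 * 2 ^ d) + 1 / 2 ^ d)
          * ‖x - y‖ := by
  refine ⟨fun x y hx hy => norm_hvec_sub_hvec_le_mul d xstar hx hy, fun r hr x y hx hy => ?_⟩
  rw [Metric.mem_closedBall, dist_zero_right, not_le] at hx hy
  have hrX : 0 ≤ r * ‖xstar‖ := by positivity
  have hx0 : 0 < ‖x‖ := hrX.trans_lt hx
  have hy0 : 0 < ‖y‖ := hrX.trans_lt hy
  have hXM : ‖xstar‖ * max ‖x‖⁻¹ ‖y‖⁻¹ ≤ r⁻¹ := by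
    rw [mul_max_of_nonneg _ _ (norm_nonneg xstar)]
    refine max_le ?_ ?_ <;> rw [← div_eq_mul_inv, div_le_iff₀ (by assumption), ← div_eq_inv_mul,
      le_div_iff₀' hr] <;> linarith
  refine (norm_hvec_sub_hvec_le_mul d xstar (norm_pos_iff.1 hx0) (norm_pos_iff.1 hy0)).trans ?_
  gcongr ?_ * _
  calc (2 * (d : ℝ) ^ 2 + (10 * π + 8) * d + 20 * π) * ‖xstar‖ / (π ^ 2 * 2 ^ d)
        * max ‖x‖⁻¹ ‖y‖⁻¹ + 1 / 2 ^ d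
      = (2 * (d : ℝ) ^ 2 + (10 * π + 8) * d + 20 * π) / (π ^ 2 * 2 ^ d)
        * (‖xstar‖ * max ‖x‖⁻¹ ‖y‖⁻¹) + 1 / 2 ^ d := by ring
    _ ≤ (2 * (d : ℝ) ^ 2 + (10 * π + 8) * d + 20 * π) / (π ^ 2 * 2 ^ d) * r⁻¹ + 1 / 2 ^ d := by
        gcongr
    _ = (2 * (d : ℝ) ^ 2 + (10 * π + 8) * d + 20 * π) / (r * π ^ 2 * 2 ^ d) + 1 / 2 ^ d := by
        field_simp

/-- Lipschitz-type bound on `x ↦ h_x` away from the origin. -/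
theorem statement_11 {k d : ℕ} (hd : 2 ≤ d) (xstar : EuclideanSpace ℝ (Fin k))
    (hxs : xstar ≠ 0) :
    (∀ x y : EuclideanSpace ℝ (Fin k), x ≠ 0 → y ≠ 0 →
      ‖hvec d xstar x - hvec d xstar y‖ ≤
        ((2 * (d : ℝ) ^ 2 + (10 * π + 8) * d + 20 * π) * ‖xstar‖ / (π ^ 2 * 2 ^ d)
            * max ‖x‖⁻¹ ‖y‖⁻¹ + 1 / 2 ^ d) * ‖x - y‖) ∧
    ∀ r : ℝ, 0 < r → ∀ x y : EuclideanSpace ℝ (Fin k),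
      x ∉ Metric.closedBall 0 (r * ‖xstar‖) → y ∉ Metric.closedBall 0 (r * ‖xstar‖) →
      ‖hvec d xstar x - hvec d xstar y‖ ≤
        ((2 * (d : ℝ) ^ 2 + (10 * π + 8) * d + 20 * π) / (r * π ^ 2 * 2 ^ d) + 1 / 2 ^ d)
          * ‖x - y‖ :=
  statement_11_general xstar

end DPR
end
end

section
/- There exist universal constants K, C > 0 such that the following holds. Fix ε > 0 with K d³ √ε ≤ 1. If A ∈ ℝ^{m × n_d} satisfies the RRCP with respect to G with constant ε and each W_i (i = 1,…,d) satisfies the WDC with constant ε, then for every nonzero x ∈ ℝ^k and every v ∈ ∂f(x), ‖v‖ ≤ (C d / 2^d) max(‖x‖, ‖x_*‖) + (2/2^{d/2}) ‖η‖. -/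
open scoped BigOperators ENNReal NNReal RealInnerProductSpace Matrix
open MeasureTheory ProbabilityTheory Real Filter

noncomputable section

namespace DPR

attribute [local instance] Classical.propDecidable

/-!
Under the WDC, `W_{+,w}ᵀ W_{+,w} ≈ I / 2` for `w ≠ 0`, so each layer `z ↦ relu (W z)` is
`√(1/2 + ε)`-Lipschitz: along a segment its one-sided derivative has the form `W_{+,w} u`.
Under the RRCP, `A_zᵀ A_z ≈ Φ_{z,z} = I` on differences of points in the range of `G`, and
coordinatewise `(|a| - |b|)² ≤ (sgn a (a - b))² + (sgn b (a - b))²`; hence `x ↦ |A G(x)|` is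
Lipschitz with constant `√(2 (1 + 33 ε)) (1/2 + ε)^{d/2} ≤ 2 / 2^{d/2}`. The objective is then
Lipschitz on the ball of radius `max ‖x‖ ‖x⋆‖` around `x`, and a Clarke subgradient `v` is bounded
by any local Lipschitz constant `L`, because `‖v‖² = ⟪v, v⟫ ≤ f°(x; v) ≤ L ‖v‖`.
-/

open Topology

section MatrixVector

variable {p q : ℕ}

lemma mulVecE_sub (M N : Matrix (Fin p) (Fin q) ℝ) (u : EuclideanSpace ℝ (Fin q)) :
    mulVecE (M - N) u = mulVecE M u - mulVecE N u := by
  simp only [mulVecE, Matrix.sub_mulVec, WithLp.toLp_sub]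

lemma continuous_mulVecE (M : Matrix (Fin p) (Fin q) ℝ) : Continuous (mulVecE M) :=
  (LinearMap.toContinuousLinearMap (Matrix.toEuclideanLin M)).continuous

lemma abs_inner_mulVecE_le (M : Matrix (Fin p) (Fin q) ℝ) (u : EuclideanSpace ℝ (Fin q))
    (v : EuclideanSpace ℝ (Fin p)) : |⟪mulVecE M u, v⟫| ≤ specNorm M * ‖u‖ * ‖v‖ :=
  (abs_real_inner_le_norm _ _).trans <| mul_le_mul_of_nonneg_right
    ((LinearMap.toContinuousLinearMap (Matrix.toEuclideanLin M)).le_opNorm u) (norm_nonneg v)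

lemma inner_mulVecE_left (M : Matrix (Fin p) (Fin q) ℝ) (u : EuclideanSpace ℝ (Fin q))
    (v : EuclideanSpace ℝ (Fin p)) : ⟪mulVecE M u, v⟫ = ⟪u, mulVecE Mᵀ v⟫ := by
  simp only [EuclideanSpace.inner_eq_star_dotProduct, mulVecE, star_trivial,
    Matrix.dotProduct_mulVec, Matrix.vecMul_transpose, dotProduct_comm]

lemma norm_mulVecE_sq (M : Matrix (Fin p) (Fin q) ℝ) (u : EuclideanSpace ℝ (Fin q)) :
    ‖mulVecE M u‖ ^ 2 = ⟪mulVecE (Mᵀ * M) u, u⟫ := by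
  rw [← real_inner_self_eq_norm_sq, inner_mulVecE_left, real_inner_comm]
  simp only [mulVecE, Matrix.mulVec_mulVec]

lemma norm_mulVecE_sq_le_of_approx (N : Matrix (Fin p) (Fin q) ℝ) (P : Matrix (Fin q) (Fin q) ℝ)
    (u : EuclideanSpace ℝ (Fin q)) {a b : ℝ} (hP : ⟪mulVecE P u, u⟫ ≤ a * ‖u‖ ^ 2)
    (hE : |⟪mulVecE (Nᵀ * N - P) u, u⟫| ≤ b * ‖u‖ ^ 2) :
    ‖mulVecE N u‖ ^ 2 ≤ (a + b) * ‖u‖ ^ 2 := by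
  have hsplit := inner_sub_left (𝕜 := ℝ) (mulVecE (Nᵀ * N) u) (mulVecE P u) u
  rw [← mulVecE_sub] at hsplit
  rw [norm_mulVecE_sq]
  linarith [le_abs_self ⟪mulVecE (Nᵀ * N - P) u, u⟫]

end MatrixVector

lemma le_sqrt_mul_of_sq_le {x y a : ℝ} (hy : 0 ≤ y) (h : x ^ 2 ≤ a * y ^ 2) : x ≤ √a * y := by
  calc x ≤ √(x ^ 2) := Real.le_sqrt_of_sq_le le_rfl
    _ ≤ √(a * y ^ 2) := Real.sqrt_le_sqrt h
    _ = √a * y := by rw [Real.sqrt_mul' _ (sq_nonneg y), Real.sqrt_sq hy]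

lemma ang_self {p : ℕ} {x : EuclideanSpace ℝ (Fin p)} (hx : x ≠ 0) : ang x x = 0 := by
  rw [ang, real_inner_self_eq_norm_mul_norm, div_self (by positivity), Real.arccos_one]

section WDC

variable {p q : ℕ} {W : Matrix (Fin p) (Fin q) ℝ} {ε : ℝ}

lemma Qmat_self {x : EuclideanSpace ℝ (Fin q)} (hx : x ≠ 0) :
    Qmat x x = (1 / 2 : ℝ) • (1 : Matrix (Fin q) (Fin q) ℝ) := by
  rw [Qmat, ang_self hx, Real.sin_zero, zero_div, zero_smul, add_zero, sub_zero,
    div_mul_cancel_right₀ Real.pi_ne_zero, one_div]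

lemma Wplus_zero (W : Matrix (Fin p) (Fin q) ℝ) : Wplus W 0 = 0 := by
  simp [Wplus]

lemma WDC.norm_mulVecE_Wplus_sq_le (hW : WDC W ε) (hε : 0 ≤ ε) (w u : EuclideanSpace ℝ (Fin q)) :
    ‖mulVecE (Wplus W w) u‖ ^ 2 ≤ (1 / 2 + ε) * ‖u‖ ^ 2 := by
  by_cases hw : w = 0
  · simp [hw, Wplus_zero, mulVecE]
    positivity
  refine norm_mulVecE_sq_le_of_approx _ (Qmat w w) u ?_ ?_
  · simp [Qmat_self hw, mulVecE, Matrix.smul_mulVec, real_inner_smul_left]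
  · exact (abs_inner_mulVecE_le _ u u).trans (by nlinarith [hW w w hw hw, norm_nonneg u])

lemma WDC.norm_mulVecE_Wplus_le (hW : WDC W ε) (hε : 0 ≤ ε) (w u : EuclideanSpace ℝ (Fin q)) :
    ‖mulVecE (Wplus W w) u‖ ≤ √(1 / 2 + ε) * ‖u‖ :=
  le_sqrt_mul_of_sq_le (norm_nonneg u) (hW.norm_mulVecE_Wplus_sq_le hε w u)

end WDC

section ReLU

/-- Reading the sign of `a + s b` just to the right of `t` treats the kink `a + t b = 0` like the
smooth cases. -/
lemma eventually_hasDerivWithinAt_relu_affine (a b t : ℝ) :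
    ∀ᶠ δ in 𝓝[>] 0, HasDerivWithinAt (fun s => max (a + s * b) 0)
      (if 0 < a + (t + δ) * b then b else 0) (Set.Ici t) t := by
  have hlin : HasDerivAt (fun s : ℝ => a + s * b) b t := (hasDerivAt_mul_const b).const_add a
  have hshift : Tendsto (fun δ : ℝ => a + (t + δ) * b) (𝓝[>] 0) (𝓝 (a + t * b)) := by
    refine Tendsto.mono_left ?_ nhdsWithin_le_nhds
    exact (by fun_prop : Continuous fun δ : ℝ => a + (t + δ) * b).tendsto' 0 _ (by simp)
  rcases lt_trichotomy (a + t * b) 0 with hneg | hzero | hpos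
  · have hzero_near : (fun s => max (a + s * b) 0) =ᶠ[𝓝 t] fun _ => 0 :=
      (hlin.continuousAt.eventually_lt_const hneg).mono fun s hs => max_eq_right hs.le
    filter_upwards [hshift.eventually_lt_const hneg] with δ hδ
    rw [if_neg hδ.not_gt]
    exact ((hasDerivAt_const t (0 : ℝ)).congr_of_eventuallyEq hzero_near).hasDerivWithinAt
  · filter_upwards [self_mem_nhdsWithin] with δ (hδ : 0 < δ)
    have hright : ∀ s ∈ Set.Ici t, a + s * b = (s - t) * b := fun s _ => by linear_combination hzero
    by_cases hb : 0 < b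
    · rw [if_pos (by nlinarith)]
      refine hlin.hasDerivWithinAt.congr (fun s hs => max_eq_left ?_) (max_eq_left hzero.ge)
      rw [hright s hs]; exact mul_nonneg (sub_nonneg.2 hs) hb.le
    · rw [if_neg (by nlinarith)]
      refine (hasDerivWithinAt_const t _ 0).congr (fun s hs => max_eq_right ?_)
        (max_eq_right hzero.le)
      rw [hright s hs]; exact mul_nonpos_of_nonneg_of_nonpos (sub_nonneg.2 hs) (not_lt.1 hb)
  · have hid_near : (fun s => max (a + s * b) 0) =ᶠ[𝓝 t] fun s => a + s * b :=
      (hlin.continuousAt.eventually_const_lt hpos).mono fun s hs => max_eq_left hs.le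
    filter_upwards [hshift.eventually_const_lt hpos] with δ hδ
    rw [if_pos hδ]
    exact (hlin.congr_of_eventuallyEq hid_near).hasDerivWithinAt

variable {p q : ℕ}

lemma mulVec_add_smul_apply (W : Matrix (Fin p) (Fin q) ℝ) (z u : EuclideanSpace ℝ (Fin q))
    (s : ℝ) (i : Fin p) : W.mulVec (z + s • u) i = W.mulVec z i + s * W.mulVec u i := by
  simp [Matrix.mulVec_add, Matrix.mulVec_smul]

lemma mulVecE_Wplus_apply (W : Matrix (Fin p) (Fin q) ℝ) (w u : EuclideanSpace ℝ (Fin q))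
    (i : Fin p) :
    mulVecE (Wplus W w) u i = if 0 < W.mulVec w i then W.mulVec u i else 0 := by
  simp only [mulVecE, Wplus, ← Matrix.mulVec_mulVec, Matrix.mulVec_diagonal, ite_mul, one_mul,
    zero_mul]

lemma exists_hasDerivWithinAt_reluE_mulVecE (W : Matrix (Fin p) (Fin q) ℝ)
    (z u : EuclideanSpace ℝ (Fin q)) (t : ℝ) :
    ∃ w, HasDerivWithinAt (fun s => reluE (mulVecE W (z + s • u)))
      (mulVecE (Wplus W w) u) (Set.Ici t) t := by
  have hcoord : ∀ᶠ δ in 𝓝[>] 0, ∀ i,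
      HasDerivWithinAt (fun s => max (W.mulVec z i + s * W.mulVec u i) 0)
      (if 0 < W.mulVec z i + (t + δ) * W.mulVec u i then W.mulVec u i else 0) (Set.Ici t) t :=
    eventually_all.2 fun i => eventually_hasDerivWithinAt_relu_affine _ _ t
  obtain ⟨δ, hδ⟩ := hcoord.exists
  refine ⟨z + (t + δ) • u, ?_⟩
  simp only [← mulVec_add_smul_apply] at hδ
  refine HasDerivWithinAt.congr_deriv (((PiLp.continuousLinearEquiv 2 ℝ (fun _ : Fin p => ℝ)).symm :
    (Fin p → ℝ) →L[ℝ] EuclideanSpace ℝ (Fin p)).hasFDerivAt.comp_hasDerivWithinAt t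
      (hasDerivWithinAt_pi.2 hδ)) ?_
  ext i
  exact (mulVecE_Wplus_apply W _ u i).symm

lemma continuous_reluE : Continuous (reluE : EuclideanSpace ℝ (Fin p) → _) :=
  (PiLp.continuous_toLp 2 _).comp <|
    continuous_pi fun i => (PiLp.continuous_apply 2 _ i).max continuous_const

variable {W : Matrix (Fin p) (Fin q) ℝ} {ε : ℝ}

lemma WDC.norm_reluE_mulVecE_sub_le (hW : WDC W ε) (hε : 0 ≤ ε) (z z' : EuclideanSpace ℝ (Fin q)) :
    ‖reluE (mulVecE W z') - reluE (mulVecE W z)‖ ≤ √(1 / 2 + ε) * ‖z' - z‖ := by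
  set h := fun s : ℝ => reluE (mulVecE W (z + s • (z' - z)))
  choose w hw using fun t => exists_hasDerivWithinAt_reluE_mulVecE W z (z' - z) t
  have hcont : Continuous h :=
    continuous_reluE.comp <| (continuous_mulVecE W).comp <|
      continuous_const.add (continuous_id.smul continuous_const)
  have := norm_image_sub_le_of_norm_deriv_right_le_segment hcont.continuousOn
    (fun t _ => hw t) (fun t _ => hW.norm_mulVecE_Wplus_le hε (w t) (z' - z)) 1
    ⟨zero_le_one, le_rfl⟩
  simpa [h] using this

end ReLU

lemma norm_net_sub_le (n : ℕ → ℕ) {ε : ℝ} (hε : 0 ≤ ε) {d : ℕ}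
    {W : ∀ i : Fin d, Matrix (Fin (n (i + 1))) (Fin (n i)) ℝ} (hW : ∀ i, WDC (W i) ε)
    (y z : EuclideanSpace ℝ (Fin (n 0))) :
    ‖net n d W y - net n d W z‖ ≤ √(1 / 2 + ε) ^ d * ‖y - z‖ := by
  induction d with
  | zero => simp [net]
  | succ d ih =>
    calc ‖net n (d + 1) W y - net n (d + 1) W z‖
        ≤ √(1 / 2 + ε) * ‖net n d (fun i => W i.castSucc) y - net n d (fun i => W i.castSucc) z‖ :=
          (hW (Fin.last d)).norm_reluE_mulVecE_sub_le hε _ _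
      _ ≤ √(1 / 2 + ε) * (√(1 / 2 + ε) ^ d * ‖y - z‖) :=
          mul_le_mul_of_nonneg_left (ih fun i => hW i.castSucc) (Real.sqrt_nonneg _)
      _ = √(1 / 2 + ε) ^ (d + 1) * ‖y - z‖ := by ring

section RRCP

lemma sq_abs_sub_abs_le (a b : ℝ) :
    (|a| - |b|) ^ 2 ≤ (Real.sign a * (a - b)) ^ 2 + (Real.sign b * (a - b)) ^ 2 := by
  have sign_sq : ∀ c : ℝ, c ≠ 0 → Real.sign c ^ 2 = 1 := fun c hc => by
    rcases Real.sign_apply_eq_of_ne_zero c hc with h | h <;> simp [h]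
  rcases eq_or_ne a 0 with rfl | ha
  · rcases eq_or_ne b 0 with rfl | hb
    · simp
    · simp [mul_pow, sign_sq b hb]
  · have := sq_le_sq.2 (abs_abs_sub_abs_le_abs_sub a b)
    rw [mul_pow, sign_sq a ha, one_mul]
    nlinarith [sq_nonneg (Real.sign b * (a - b))]

variable {p m : ℕ}

lemma norm_absVecE_sub_sq_le (A : Matrix (Fin m) (Fin p) ℝ) (y z : EuclideanSpace ℝ (Fin p)) :
    ‖absVecE (mulVecE A y) - absVecE (mulVecE A z)‖ ^ 2
      ≤ ‖mulVecE (Asign A y) (y - z)‖ ^ 2 + ‖mulVecE (Asign A z) (y - z)‖ ^ 2 := by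
  simp only [EuclideanSpace.norm_sq_eq, Real.norm_eq_abs, sq_abs, ← Finset.sum_add_distrib]
  refine Finset.sum_le_sum fun i _ => ?_
  simpa [absVecE, mulVecE, Asign, ← Matrix.mulVec_mulVec, Matrix.mulVec_diagonal,
    Matrix.mulVec_sub, ← mul_sub] using sq_abs_sub_abs_le (A.mulVec y i) (A.mulVec z i)

lemma inner_mulVecE_Phi_self_le (x w : EuclideanSpace ℝ (Fin p)) :
    ⟪mulVecE (Phi x x) w, w⟫ ≤ ‖w‖ ^ 2 := by
  by_cases hx : x = 0
  · simp [Phi, hx, mulVecE]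
  · simp [Phi, hx, ang_self, mulVecE]

end RRCP

section Network

variable {n : ℕ → ℕ} {d m : ℕ} {W : ∀ i : Fin d, Matrix (Fin (n (i + 1))) (Fin (n i)) ℝ}
  {A : Matrix (Fin m) (Fin (n d)) ℝ} {ε : ℝ}

lemma RRCP.norm_mulVecE_Asign_sq_le (hR : RRCP n d m W A ε) (x y z : EuclideanSpace ℝ (Fin (n 0))) :
    ‖mulVecE (Asign A (net n d W x)) (net n d W y - net n d W z)‖ ^ 2
      ≤ (1 + 33 * ε) * ‖net n d W y - net n d W z‖ ^ 2 := by
  refine norm_mulVecE_sq_le_of_approx _ (Phi (net n d W x) (net n d W x)) _ ?_ ?_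
  · rw [one_mul]; exact inner_mulVecE_Phi_self_le _ _
  · exact (hR x x y z y z).trans_eq (by ring)

lemma RRCP.norm_absVecE_sub_le (hR : RRCP n d m W A ε) (y z : EuclideanSpace ℝ (Fin (n 0))) :
    ‖absVecE (mulVecE A (net n d W y)) - absVecE (mulVecE A (net n d W z))‖
      ≤ √(2 * (1 + 33 * ε)) * ‖net n d W y - net n d W z‖ :=
  le_sqrt_mul_of_sq_le (norm_nonneg _) <| (norm_absVecE_sub_sq_le A _ _).trans <| by
    linarith [hR.norm_mulVecE_Asign_sq_le y y z, hR.norm_mulVecE_Asign_sq_le z y z]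

lemma norm_absVecE_mulVecE_net_sub_le (hε : 0 ≤ ε) (hR : RRCP n d m W A ε)
    (hW : ∀ i, WDC (W i) ε) (y z : EuclideanSpace ℝ (Fin (n 0))) :
    ‖absVecE (mulVecE A (net n d W y)) - absVecE (mulVecE A (net n d W z))‖
      ≤ √(2 * (1 + 33 * ε)) * √(1 / 2 + ε) ^ d * ‖y - z‖ := by
  rw [mul_assoc]
  exact (hR.norm_absVecE_sub_le y z).trans <|
    mul_le_mul_of_nonneg_left (norm_net_sub_le n hε hW y z) (Real.sqrt_nonneg _)

end Network

lemma one_add_pow_le_inv_one_sub_mul {x : ℝ} (hx0 : 0 ≤ x) (hx1 : x ≤ 1) {d : ℕ}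
    (hdx : d * x < 1) : (1 + x) ^ d ≤ (1 - d * x)⁻¹ := by
  have bernoulli : 1 - d * x ≤ (1 - x) ^ d := by
    simpa [sub_eq_add_neg] using one_add_mul_le_pow (show -2 ≤ -x by linarith) d
  rw [← one_div, le_div_iff₀ (sub_pos.2 hdx)]
  calc (1 + x) ^ d * (1 - d * x) ≤ (1 + x) ^ d * (1 - x) ^ d := by gcongr
    _ = (1 - x ^ 2) ^ d := by rw [← mul_pow]; ring
    _ ≤ 1 := pow_le_one₀ (by nlinarith) (by nlinarith)

lemma two_div_two_rpow_half_sq (d : ℕ) : (2 / (2 : ℝ) ^ ((d : ℝ) / 2)) ^ 2 = 4 / 2 ^ d := by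
  rw [div_pow, ← Real.rpow_natCast ((2 : ℝ) ^ _), ← Real.rpow_mul zero_le_two]
  norm_num

lemma sqrt_mul_sqrt_pow_le {d : ℕ} {ε : ℝ} (hd : 2 ≤ d) (hε : 0 ≤ ε)
    (hK : 100 * (d : ℝ) ^ 3 * √ε ≤ 1) :
    √(2 * (1 + 33 * ε)) * √(1 / 2 + ε) ^ d ≤ 2 / (2 : ℝ) ^ ((d : ℝ) / 2) := by
  have hd' : (2 : ℝ) ≤ d := by exact_mod_cast hd
  have hs : 400 * d * √ε ≤ 1 := by
    have : 400 * (d : ℝ) ≤ 100 * d ^ 3 := by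
      nlinarith [mul_le_mul hd' hd' zero_le_two (by linarith)]
    nlinarith [mul_le_mul_of_nonneg_right this (Real.sqrt_nonneg ε)]
  have hε_sq : ε = √ε * √ε := (Real.mul_self_sqrt hε).symm
  have hdε : 2 * d * ε ≤ 1 / 10 := by nlinarith [Real.sqrt_nonneg ε]
  have hε_small : 33 * ε ≤ 1 / 10 := by nlinarith [Real.sqrt_nonneg ε]
  have hpow : (1 + 2 * ε) ^ d ≤ 10 / 9 := by
    refine (one_add_pow_le_inv_one_sub_mul (by positivity) (by nlinarith) (by linarith)).trans ?_
    rw [inv_le_comm₀ (by linarith) (by norm_num)]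
    linarith
  have hsq : (√(2 * (1 + 33 * ε)) * √(1 / 2 + ε) ^ d) ^ 2 ≤ 4 / 2 ^ d := by
    rw [mul_pow, ← pow_mul, mul_comm d, pow_mul, Real.sq_sqrt (by positivity),
      Real.sq_sqrt (by positivity), show 1 / 2 + ε = (1 + 2 * ε) / 2 by ring, div_pow,
      le_div_iff₀ (by positivity), mul_assoc, div_mul_cancel₀ _ (by positivity)]
    calc 2 * (1 + 33 * ε) * (1 + 2 * ε) ^ d ≤ 2 * (1 + 1 / 10) * (10 / 9) := by
          gcongr
      _ ≤ 4 := by norm_num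
  rw [← two_div_two_rpow_half_sq] at hsq
  exact (pow_le_pow_iff_left₀ (by positivity) (by positivity) two_ne_zero).1 hsq

section Clarke

variable {k : ℕ} {f : EuclideanSpace ℝ (Fin k) → ℝ} {x : EuclideanSpace ℝ (Fin k)} {r L : ℝ}

lemma clarkeDeriv_le_of_lipschitz_ball (hr : 0 < r)
    (hf : ∀ y ∈ Metric.ball x r, ∀ y' ∈ Metric.ball x r, |f y - f y'| ≤ L * ‖y - y'‖)
    (u : EuclideanSpace ℝ (Fin k)) : clarkeDeriv f x u ≤ L * ‖u‖ := by
  have hpos : ∀ᶠ q : EuclideanSpace ℝ (Fin k) × ℝ in 𝓝 x ×ˢ 𝓝[>] 0, 0 < q.2 :=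
    tendsto_snd.eventually (self_mem_nhdsWithin (a := (0 : ℝ)) (s := Set.Ioi 0))
  have hstart : ∀ᶠ q : EuclideanSpace ℝ (Fin k) × ℝ in 𝓝 x ×ˢ 𝓝[>] 0, q.1 ∈ Metric.ball x r :=
    tendsto_fst.eventually_mem (Metric.ball_mem_nhds x hr)
  have hend : ∀ᶠ q : EuclideanSpace ℝ (Fin k) × ℝ in 𝓝 x ×ˢ 𝓝[>] 0,
      q.1 + q.2 • u ∈ Metric.ball x r := by
    have hlim : Tendsto (fun q : EuclideanSpace ℝ (Fin k) × ℝ => q.1 + q.2 • u)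
        (𝓝 x ×ˢ 𝓝[>] 0) (𝓝 x) := by
      have hsnd : Tendsto (fun q : EuclideanSpace ℝ (Fin k) × ℝ => q.2) (𝓝 x ×ˢ 𝓝[>] 0) (𝓝 0) :=
        tendsto_snd.mono_right nhdsWithin_le_nhds
      simpa using tendsto_fst.add (hsnd.smul_const u)
    exact hlim.eventually_mem (Metric.ball_mem_nhds x hr)
  have hquot : ∀ᶠ q : EuclideanSpace ℝ (Fin k) × ℝ in 𝓝 x ×ˢ 𝓝[>] 0,
      |(f (q.1 + q.2 • u) - f q.1) / q.2| ≤ L * ‖u‖ := by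
    filter_upwards [hpos, hstart, hend] with q hq hq₁ hq₂
    rw [abs_div, abs_of_pos hq, div_le_iff₀ hq]
    calc |f (q.1 + q.2 • u) - f q.1| ≤ L * ‖q.1 + q.2 • u - q.1‖ := hf _ hq₂ _ hq₁
      _ = L * ‖u‖ * q.2 := by rw [add_sub_cancel_left, norm_smul, Real.norm_of_nonneg hq.le]; ring
  exact limsup_le_of_le (isCoboundedUnder_le_of_eventually_le _
    (hquot.mono fun q hq => neg_le_of_abs_le hq)) (hquot.mono fun q hq => le_of_abs_le hq)

lemma norm_le_of_mem_clarkeSubdiff (hr : 0 < r) (hL : 0 ≤ L)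
    (hf : ∀ y ∈ Metric.ball x r, ∀ y' ∈ Metric.ball x r, |f y - f y'| ≤ L * ‖y - y'‖)
    {v : EuclideanSpace ℝ (Fin k)} (hv : v ∈ clarkeSubdiff f x) : ‖v‖ ≤ L := by
  have hsq : ‖v‖ ^ 2 ≤ L * ‖v‖ := by
    rw [← real_inner_self_eq_norm_sq]
    exact (hv v).trans (clarkeDeriv_le_of_lipschitz_ball hr hf v)
  nlinarith [norm_nonneg v]

end Clarke

section Objective

variable {E F : Type*} [NormedAddCommGroup E] [NormedAddCommGroup F]

lemma abs_half_norm_sub_sq_sub_le (a b c : F) :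
    |1 / 2 * ‖a - c‖ ^ 2 - 1 / 2 * ‖b - c‖ ^ 2| ≤ ‖a - b‖ * ((‖a - c‖ + ‖b - c‖) / 2) := by
  have h := abs_norm_sub_norm_le (a - c) (b - c)
  rw [sub_sub_sub_cancel_right] at h
  rw [show 1 / 2 * ‖a - c‖ ^ 2 - 1 / 2 * ‖b - c‖ ^ 2
      = (‖a - c‖ - ‖b - c‖) * ((‖a - c‖ + ‖b - c‖) / 2) by ring, abs_mul,
    abs_of_nonneg (by positivity : 0 ≤ (‖a - c‖ + ‖b - c‖) / 2)]
  exact mul_le_mul_of_nonneg_right h (by positivity)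

lemma abs_half_norm_sub_sq_sub_le_of_lipschitz {g : E → F} {γ : ℝ} (hγ : 0 ≤ γ)
    (hg : ∀ y z, ‖g y - g z‖ ≤ γ * ‖y - z‖) (x₀ : E) (b : F) {x : E} {r : ℝ}
    {y y' : E} (hy : y ∈ Metric.ball x r) (hy' : y' ∈ Metric.ball x r) :
    |1 / 2 * ‖g y - (g x₀ + b)‖ ^ 2 - 1 / 2 * ‖g y' - (g x₀ + b)‖ ^ 2|
      ≤ γ * (γ * (r + ‖x - x₀‖) + ‖b‖) * ‖y - y'‖ := by
  have hres : ∀ w ∈ Metric.ball x r, ‖g w - (g x₀ + b)‖ ≤ γ * (r + ‖x - x₀‖) + ‖b‖ := by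
    intro w hw
    rw [Metric.mem_ball, dist_eq_norm] at hw
    calc ‖g w - (g x₀ + b)‖ ≤ ‖g w - g x₀‖ + ‖b‖ := by
          rw [← sub_sub]; exact norm_sub_le _ _
      _ ≤ γ * ‖w - x₀‖ + ‖b‖ := by gcongr; exact hg w x₀
      _ ≤ γ * (r + ‖x - x₀‖) + ‖b‖ := by
          gcongr
          calc ‖w - x₀‖ ≤ ‖w - x‖ + ‖x - x₀‖ := norm_sub_le_norm_sub_add_norm_sub _ _ _
            _ ≤ r + ‖x - x₀‖ := by linarith
  calc _ ≤ ‖g y - g y'‖ * ((‖g y - (g x₀ + b)‖ + ‖g y' - (g x₀ + b)‖) / 2) :=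
        abs_half_norm_sub_sq_sub_le _ _ _
    _ ≤ γ * ‖y - y'‖ * (γ * (r + ‖x - x₀‖) + ‖b‖) := by
        gcongr
        · exact hg y y'
        · linarith [hres y hy, hres y' hy']
    _ = _ := by ring

end Objective

/-- upper bound on the norm of any Clarke subgradient of `f`. -/
theorem statement_13 :
    ∃ K > (0 : ℝ), ∃ C > (0 : ℝ), ∀ (n : ℕ → ℕ) (d : ℕ), 2 ≤ d → ∀ m : ℕ,
      (∀ i, i < d → n i < n (i + 1)) →
      ∀ (W : ∀ i : Fin d, Matrix (Fin (n (i + 1))) (Fin (n i)) ℝ)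
        (A : Matrix (Fin m) (Fin (n d)) ℝ)
        (xstar : EuclideanSpace ℝ (Fin (n 0))) (η : EuclideanSpace ℝ (Fin m)),
        xstar ≠ 0 →
        ∀ ε : ℝ, 0 < ε → K * (d : ℝ) ^ 3 * Real.sqrt ε ≤ 1 →
        RRCP n d m W A ε → (∀ i : Fin d, WDC (W i) ε) →
        ∀ x : EuclideanSpace ℝ (Fin (n 0)), x ≠ 0 →
        ∀ v ∈ clarkeSubdiff (objf n d m W A xstar η) x,
          ‖v‖ ≤ C * (d : ℝ) / 2 ^ d * max ‖x‖ ‖xstar‖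
              + 2 / (2 : ℝ) ^ ((d : ℝ) / 2) * ‖η‖ := by
  refine ⟨100, by norm_num, 12, by norm_num, ?_⟩
  intro n d hd m _ W A xstar η _ ε hε hK hR hW x hx v hv
  set γ := 2 / (2 : ℝ) ^ ((d : ℝ) / 2)
  set M := max ‖x‖ ‖xstar‖
  have hγ : 0 ≤ γ := by positivity
  have hM : 0 < M := lt_max_of_lt_left (norm_pos_iff.2 hx)
  have hlip : ∀ y z, ‖absVecE (mulVecE A (net n d W y)) - absVecE (mulVecE A (net n d W z))‖
      ≤ γ * ‖y - z‖ := fun y z =>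
    (norm_absVecE_mulVecE_net_sub_le hε.le hR hW y z).trans <|
      mul_le_mul_of_nonneg_right (sqrt_mul_sqrt_pow_le hd hε.le hK) (norm_nonneg _)
  have hv_le := norm_le_of_mem_clarkeSubdiff hM (by positivity)
    (fun y hy y' hy' => abs_half_norm_sub_sq_sub_le_of_lipschitz hγ hlip xstar η hy hy') hv
  have hdist : ‖x - xstar‖ ≤ 2 * M :=
    (norm_sub_le _ _).trans (by linarith [le_max_left ‖x‖ ‖xstar‖, le_max_right ‖x‖ ‖xstar‖])
  calc ‖v‖ ≤ γ * (γ * (M + ‖x - xstar‖) + ‖η‖) := hv_le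
    _ ≤ 3 * γ ^ 2 * M + γ * ‖η‖ := by nlinarith
    _ = 12 / 2 ^ d * M + γ * ‖η‖ := by rw [two_div_two_rpow_half_sq]; ring
    _ ≤ 12 * d / 2 ^ d * M + γ * ‖η‖ := by
        gcongr
        have : (1 : ℝ) ≤ d := by exact_mod_cast one_le_two.trans hd
        linarith

end DPR
end
end
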